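/- arXiv:2204.08827 — 4 statements merged into one kernel-verified Lean document; each statement's English description precedes it below -/
import Mathlib

section
/- Under Assumptions (B1)–(B3), for every noise path Z (with some Hölder constant Λ > 0) there exists a unique pathwise solution, i.e. a unique continuous function Y : [0,T] → ℝ such that φ(t) < Y(t) < ψ(t) for all t ∈ [0,T] and Y(t) = Y(0) + ∫₀ᵗ b(s, Y(s)) ds + Z(t) for all t ∈ [0,T]. -/
/-!
Let `u = Y - φ` be the distance to the lower barrier. While `u ≤ δ` the drift is at least
`A = c₂ δ^(-γ)`, whereas `Z - φ` is `λ`-Hölder with constant `K + Λ`; so over a time span `h`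
spent in that layer `u` changes by at least `A h - (K + Λ) h^λ`, and since `γ > 1/λ - 1` this is
`≥ -δ/2` for all `h` once `δ` is small. Hence every solution started `δ` away from the barriers
stays `δ/2` away from them. In the band of width `δ/2` the drift is Lipschitz, so after clamping
its argument into that band, `X = Y - Z` solves an ODE with a bounded, globally Lipschitz vector
field, which Picard–Lindelöf solves; the a priori bound shows that the clamp is never active.
Uniqueness is Grönwall's inequality inside the band.
-/

open MeasureTheory Set Filter Topology
open scoped NNReal

def HolderOnIcc (T K lam : ℝ) (f : ℝ → ℝ) : Prop :=
  ∀ s ∈ Icc (0:ℝ) T, ∀ t ∈ Icc (0:ℝ) T, |f t - f s| ≤ K * |t - s| ^ lam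

namespace HolderOnIcc

variable {T K K' lam : ℝ} {f g : ℝ → ℝ}

theorem continuousOn (hf : HolderOnIcc T K lam f) (hlam : 0 < lam) :
    ContinuousOn f (Icc 0 T) := by
  intro s hs
  have hlim : Tendsto (fun t => K * |t - s| ^ lam) (𝓝[Icc 0 T] s) (𝓝 0) := by
    have hc : Continuous fun t : ℝ => K * |t - s| ^ lam :=
      continuous_const.mul ((continuous_id.sub continuous_const).abs.rpow_const
        fun _ => Or.inr hlam.le)
    simpa [Real.zero_rpow hlam.ne'] using hc.continuousWithinAt.tendsto (s := Icc 0 T) (x := s)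
  rw [ContinuousWithinAt, tendsto_iff_dist_tendsto_zero]
  exact squeeze_zero' (.of_forall fun _ => dist_nonneg)
    (eventually_mem_nhdsWithin.mono fun t ht => hf s hs t ht) hlim

theorem sub (hf : HolderOnIcc T K lam f) (hg : HolderOnIcc T K' lam g) :
    HolderOnIcc T (K + K') lam (f - g) := fun s hs t ht => by
  calc |(f - g) t - (f - g) s| ≤ |f t - f s| + |g t - g s| := by
        simpa [sub_sub_sub_comm] using abs_sub (f t - f s) (g t - g s)
    _ ≤ K * |t - s| ^ lam + K' * |t - s| ^ lam := add_le_add (hf s hs t ht) (hg s hs t ht)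
    _ = (K + K') * |t - s| ^ lam := by ring

theorem sub_le {s t : ℝ} (hf : HolderOnIcc T K lam f) (hs : s ∈ Icc 0 T) (ht : t ∈ Icc 0 T)
    (hst : s ≤ t) : f s - f t ≤ K * (t - s) ^ lam := by
  have := hf s hs t ht
  rw [abs_of_nonneg (sub_nonneg.2 hst)] at this
  linarith [neg_abs_le (f t - f s)]

end HolderOnIcc

theorem le_of_forall_drop_le {T a c : ℝ} {u : ℝ → ℝ} (hu : ContinuousOn u (Icc 0 T))
    (hc : 0 ≤ c) (h0 : a ≤ u 0)
    (hdrop : ∀ s ∈ Icc 0 T, ∀ t ∈ Icc 0 T, s < t → (∀ r ∈ Icc s t, u r ≤ a) → u s - c ≤ u t) :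
    ∀ t ∈ Icc 0 T, a - c ≤ u t := by
  intro t ht
  by_contra! hlt
  have hsub : Icc 0 t ⊆ Icc 0 T := Icc_subset_Icc_right ht.2
  have hclosed : IsClosed (Icc 0 t ∩ u ⁻¹' Ici a) :=
    (hu.mono hsub).preimage_isClosed_of_isClosed isClosed_Icc isClosed_Ici
  -- `s` is the last time before `t` at which `u ≥ a`
  obtain ⟨s, ⟨hs, hus⟩, hmax⟩ := (isCompact_Icc.of_isClosed_subset hclosed
    inter_subset_left).exists_isGreatest ⟨0, left_mem_Icc.2 ht.1, h0⟩
  have hus : a ≤ u s := hus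
  have hst : s < t := hs.2.lt_of_ne (by rintro rfl; linarith)
  have hbelow : ∀ r ∈ Ioc s t, u r ≤ a := fun r hr =>
    le_of_not_ge fun h => hr.1.not_ge (hmax ⟨⟨hs.1.trans hr.1.le, hr.2⟩, h⟩)
  have hus' : u s ≤ a :=
    ContinuousWithinAt.closure_le (by rw [closure_Ioc hst.ne]; exact left_mem_Icc.2 hst.le)
      ((hu s (hsub hs)).mono fun r hr => ⟨hs.1.trans hr.1.le, hr.2.trans ht.2⟩)
      continuousWithinAt_const hbelow
  have := hdrop s (hsub hs) t ht hst fun r hr =>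
    (eq_or_lt_of_le hr.1).elim (fun h => h ▸ hus') fun h => hbelow r ⟨h, hr.2⟩
  linarith

theorem half_le_of_sub_eq_integral_add {T lam B A δ : ℝ} {u g V : ℝ → ℝ}
    (hu : ContinuousOn u (Icc 0 T)) (hg : IntervalIntegrable g volume 0 T)
    (hV : HolderOnIcc T B lam V)
    (hinc : ∀ s ∈ Icc 0 T, ∀ t ∈ Icc 0 T, s ≤ t → u t - u s = (∫ r in s..t, g r) + (V t - V s))
    (hgA : ∀ t ∈ Icc 0 T, u t ≤ δ → A ≤ g t)
    (hAB : ∀ h, 0 < h → B * h ^ lam ≤ A * h + δ / 2) (hδ : 0 ≤ δ) (h0 : δ ≤ u 0) :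
    ∀ t ∈ Icc 0 T, δ / 2 ≤ u t := by
  have key := le_of_forall_drop_le (c := δ / 2) hu (by positivity) h0 ?_
  · exact fun t ht => by linarith [key t ht]
  intro s hs t ht hst hle
  have hint : A * (t - s) ≤ ∫ r in s..t, g r := by
    have hgst : IntervalIntegrable g volume s t :=
      hg.mono_set (uIcc_subset_uIcc (Icc_subset_uIcc hs) (Icc_subset_uIcc ht))
    simpa [mul_comm] using intervalIntegral.integral_mono_on hst.le intervalIntegrable_const hgst
      fun r hr => hgA r ⟨hs.1.trans hr.1, hr.2.trans ht.2⟩ (hle r hr)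
  linarith [hinc s hs t ht hst.le, hV.sub_le hs ht hst.le, hAB (t - s) (sub_pos.2 hst)]

theorem margin_of_eq_integral_add {T lam K Λ δ A : ℝ} {phi psi Z W g : ℝ → ℝ}
    (hlam : 0 < lam) (hphi : HolderOnIcc T K lam phi) (hpsi : HolderOnIcc T K lam psi)
    (hZ : HolderOnIcc T Λ lam Z) (hW : ContinuousOn W (Icc 0 T))
    (hg : IntervalIntegrable g volume 0 T)
    (hWeq : ∀ t ∈ Icc 0 T, W t = W 0 + (∫ s in 0..t, g s) + Z t)
    (hlow : ∀ t ∈ Icc 0 T, W t - phi t ≤ δ → A ≤ g t)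
    (hup : ∀ t ∈ Icc 0 T, psi t - W t ≤ δ → g t ≤ -A)
    (hAB : ∀ h, 0 < h → (K + Λ) * h ^ lam ≤ A * h + δ / 2) (hδ : 0 ≤ δ)
    (h0 : phi 0 + δ ≤ W 0 ∧ W 0 ≤ psi 0 - δ) :
    ∀ t ∈ Icc 0 T, W t ∈ Icc (phi t + δ / 2) (psi t - δ / 2) := by
  have hinc : ∀ s ∈ Icc 0 T, ∀ t ∈ Icc 0 T,
      W t - W s = (∫ r in s..t, g r) + (Z t - Z s) := fun s hs t ht => by
    have hg0 : ∀ x ∈ Icc 0 T, IntervalIntegrable g volume 0 x := fun x hx =>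
      hg.mono_set (uIcc_subset_uIcc_left (Icc_subset_uIcc hx))
    rw [hWeq t ht, hWeq s hs,
      ← intervalIntegral.integral_interval_sub_left (hg0 t ht) (hg0 s hs)]
    ring
  have hZphi : HolderOnIcc T (K + Λ) lam (Z - phi) := by rw [add_comm]; exact hZ.sub hphi
  have lower := half_le_of_sub_eq_integral_add (u := fun t => W t - phi t)
    (hW.sub (hphi.continuousOn hlam)) hg hZphi
    (fun s hs t ht _ => by simp only [Pi.sub_apply]; linarith [hinc s hs t ht])
    hlow hAB hδ (by linarith)
  have upper := half_le_of_sub_eq_integral_add (u := fun t => psi t - W t)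
    ((hpsi.continuousOn hlam).sub hW) hg.neg (hpsi.sub hZ) (fun s hs t ht _ => by
      simp only [Pi.sub_apply, Pi.neg_apply, intervalIntegral.integral_neg]
      linarith [hinc s hs t ht])
    (fun t ht h => le_neg.2 (hup t ht h)) hAB hδ (by linarith)
  exact fun t ht => ⟨by linarith [lower t ht], by linarith [upper t ht]⟩

theorem mul_rpow_le_mul_add {lam B A δ h : ℝ} (hlam : lam ∈ Ioo 0 1) (hB : 0 < B)
    (hA : B * (δ / (2 * B)) ^ (1 - 1 / lam) ≤ A) (hδ : 0 < δ) (hh : 0 < h) :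
    B * h ^ lam ≤ A * h + δ / 2 := by
  have hA0 : 0 ≤ A := le_trans (by positivity) hA
  rcases le_or_gt (B * h ^ lam) (δ / 2) with hsmall | hbig
  · nlinarith
  -- past the point where `B h^λ = δ/2`, the slope `h^(λ-1)` is at most its value there
  have hpow : h ^ (lam - 1) ≤ (δ / (2 * B)) ^ (1 - 1 / lam) := by
    have hexp : h ^ (lam - 1) = (h ^ lam) ^ (1 - 1 / lam) := by
      rw [← Real.rpow_mul hh.le]; congr 1; field_simp [hlam.1.ne']
    rw [hexp]
    refine Real.rpow_le_rpow_of_nonpos (by positivity) ?_ ?_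
    · rw [div_le_iff₀ (by positivity)]; linarith
    · rw [sub_nonpos, le_div_iff₀ hlam.1]; linarith [hlam.2]
  calc B * h ^ lam = B * h ^ (lam - 1) * h := by
        rw [mul_assoc, ← Real.rpow_add_one hh.ne', sub_add_cancel]
    _ ≤ B * (δ / (2 * B)) ^ (1 - 1 / lam) * h := by gcongr
    _ ≤ A * h + δ / 2 := by nlinarith

theorem eventually_mul_rpow_le_div_rpow_mul_add {lam gam c : ℝ} (hlam : lam ∈ Ioo 0 1)
    (hgam : 1 / lam - 1 < gam) (hc : 0 < c) (B : ℝ) :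
    ∀ᶠ δ in 𝓝[>] 0, ∀ h, 0 < h → B * h ^ lam ≤ c / δ ^ gam * h + δ / 2 := by
  set B' := max B 1
  have hB' : 0 < B' := lt_max_of_lt_right one_pos
  set e := gam + 1 - 1 / lam
  have he : 0 < e := by simp only [e]; linarith
  set M := B' * (2 * B') ^ (1 / lam - 1)
  have hM : 0 < M := by positivity
  -- `B' (δ / 2B')^(1 - 1/λ) = M δ^e / δ^γ` with `e > 0`
  have hlim : Tendsto (fun δ : ℝ => δ ^ e) (𝓝[>] 0) (𝓝 0) := by
    simpa [Real.zero_rpow he.ne'] using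
      (Real.continuousAt_rpow_const 0 e (Or.inr he.le)).tendsto.mono_left nhdsWithin_le_nhds
  filter_upwards [self_mem_nhdsWithin, hlim.eventually (eventually_le_nhds (div_pos hc hM))]
    with δ (hδ : 0 < δ) hsmall h hh
  have hA : B' * (δ / (2 * B')) ^ (1 - 1 / lam) ≤ c / δ ^ gam := by
    have h1 : (2 * B') ^ (1 / lam - 1) = ((2 * B') ^ (1 - 1 / lam))⁻¹ := by
      rw [← Real.rpow_neg (by positivity), neg_sub]
    have h2 : δ ^ e = δ ^ (1 - 1 / lam) * δ ^ gam := by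
      rw [← Real.rpow_add hδ]; congr 1; simp only [e]; ring
    have hsplit : B' * (δ / (2 * B')) ^ (1 - 1 / lam) = M * δ ^ e / δ ^ gam := by
      rw [Real.div_rpow hδ.le (by positivity), h2]
      simp only [M, h1]
      field_simp
    rw [hsplit]
    gcongr
    rwa [le_div_iff₀ hM, mul_comm] at hsmall
  calc B * h ^ lam ≤ B' * h ^ lam := by gcongr; exact le_max_left _ _
    _ ≤ c / δ ^ gam * h + δ / 2 := mul_rpow_le_mul_add hlam hB' hA hδ hh

def clampIcc (lo hi y : ℝ) : ℝ := max lo (min hi y)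

section clampIcc

variable {lo hi y : ℝ}

theorem clampIcc_mem_Icc (h : lo ≤ hi) : clampIcc lo hi y ∈ Icc lo hi :=
  ⟨le_max_left _ _, max_le h (min_le_left _ _)⟩

theorem clampIcc_of_mem (hy : y ∈ Icc lo hi) : clampIcc lo hi y = y := by
  rw [clampIcc, min_eq_right hy.2, max_eq_right hy.1]

theorem clampIcc_le_max : clampIcc lo hi y ≤ max lo y :=
  max_le_max le_rfl (min_le_right _ _)

theorem min_le_clampIcc : min hi y ≤ clampIcc lo hi y :=
  le_max_right _ _

theorem lipschitzWith_clampIcc : LipschitzWith 1 (clampIcc lo hi) :=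
  (LipschitzWith.id.const_min hi).const_max lo

theorem ContinuousOn.clampIcc {α : Type*} [TopologicalSpace α] {s : Set α} {l h f : α → ℝ}
    (hl : ContinuousOn l s) (hh : ContinuousOn h s) (hf : ContinuousOn f s) :
    ContinuousOn (fun x => clampIcc (l x) (h x) (f x)) s :=
  hl.sup (hh.inf hf)

end clampIcc

theorem isCompact_setOf_mem_Icc_le_le {a b : ℝ} {f g : ℝ → ℝ} (hf : ContinuousOn f (Icc a b))
    (hg : ContinuousOn g (Icc a b)) :
    IsCompact {q : ℝ × ℝ | q.1 ∈ Icc a b ∧ f q.1 ≤ q.2 ∧ q.2 ≤ g q.1} := by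
  obtain ⟨Cf, hCf⟩ := isCompact_Icc.exists_bound_of_continuousOn hf
  obtain ⟨Cg, hCg⟩ := isCompact_Icc.exists_bound_of_continuousOn hg
  have hs : IsClosed (Icc a b ×ˢ (univ : Set ℝ)) := isClosed_Icc.prod isClosed_univ
  have hclosed : IsClosed {q : ℝ × ℝ | q.1 ∈ Icc a b ∧ f q.1 ≤ q.2 ∧ q.2 ≤ g q.1} := by
    convert (hs.isClosed_le (hf.comp continuousOn_fst fun q hq => hq.1) continuousOn_snd).inter
      (hs.isClosed_le continuousOn_snd (hg.comp continuousOn_fst fun q hq => hq.1)) using 1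
    ext q
    simp only [mem_ofPred_eq, mem_inter_iff, mem_prod, mem_univ, and_true, Function.comp_apply]
    tauto
  refine ((isCompact_Icc (a := a) (b := b)).prod
    (isCompact_Icc (a := -Cf) (b := Cg))).of_isClosed_subset hclosed ?_
  rintro q ⟨hq, hfq, hgq⟩
  have := abs_le.1 (hCf q.1 hq)
  have := abs_le.1 (hCg q.1 hq)
  exact ⟨hq, by linarith, by linarith⟩

theorem exists_forall_norm_le_of_band {T ε : ℝ} {phi psi : ℝ → ℝ} {b : ℝ → ℝ → ℝ}
    (hphi : ContinuousOn phi (Icc 0 T)) (hpsi : ContinuousOn psi (Icc 0 T)) (hε : 0 < ε)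
    (hb : ContinuousOn (fun q : ℝ × ℝ => b q.1 q.2)
      {q : ℝ × ℝ | q.1 ∈ Icc 0 T ∧ phi q.1 < q.2 ∧ q.2 < psi q.1}) :
    ∃ C : ℝ≥0, ∀ t ∈ Icc 0 T, ∀ y ∈ Icc (phi t + ε) (psi t - ε), ‖b t y‖ ≤ C := by
  obtain ⟨C, hC⟩ := (isCompact_setOf_mem_Icc_le_le (f := fun t => phi t + ε)
    (g := fun t => psi t - ε) (hphi.add continuousOn_const)
    (hpsi.sub continuousOn_const)).exists_bound_of_continuousOn
    (hb.mono fun q hq => ⟨hq.1, by linarith [hq.2.1], by linarith [hq.2.2]⟩)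
  exact ⟨C.toNNReal, fun t ht y hy =>
    (hC (t, y) ⟨ht, hy.1, hy.2⟩).trans (Real.le_coe_toNNReal C)⟩

theorem exists_eq_integral_of_lipschitzWith {E : Type*} [NormedAddCommGroup E]
    [NormedSpace ℝ E] [CompleteSpace E] {T : ℝ} (hT : 0 ≤ T) {g : ℝ → E → E} {C L : ℝ≥0}
    (x₀ : E) (hg : ContinuousOn (Function.uncurry g) (Icc 0 T ×ˢ univ))
    (hlip : ∀ t ∈ Icc 0 T, LipschitzWith L (g t)) (hbdd : ∀ t ∈ Icc 0 T, ∀ x, ‖g t x‖ ≤ C) :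
    ∃ X : ℝ → E, ContinuousOn X (Icc 0 T) ∧
      ∀ t ∈ Icc 0 T, X t = x₀ + ∫ s in 0..t, g s (X s) := by
  have hpl : IsPicardLindelof g (tmin := 0) (tmax := T) ⟨0, left_mem_Icc.2 hT⟩ x₀
      (C * ⟨T, hT⟩) 0 C L :=
    { lipschitzOnWith := fun t ht => (hlip t ht).lipschitzOnWith
      continuousOn := fun x _ =>
        hg.comp (continuousOn_id.prodMk continuousOn_const) fun t ht => ⟨ht, mem_univ _⟩
      norm_le := fun t ht x _ => hbdd t ht x
      mul_max_le := by simp [hT]; exact le_rfl }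
  obtain ⟨X, hX0, hX⟩ := hpl.exists_eq_forall_mem_Icc_hasDerivWithinAt₀
  refine ⟨X, fun t ht => (hX t ht).continuousWithinAt, fun t ht => ?_⟩
  have hsub : uIcc 0 t ⊆ Icc 0 T := uIcc_subset_Icc (left_mem_Icc.2 hT) ht
  have := ODE.picard_eq_of_hasDerivAt (t₀ := 0) (hg.mono (prod_mono hsub subset_rfl))
    (fun s hs => (hX s (hsub hs)).mono hsub) (mapsTo_univ _ _)
  rw [← this, ODE.picard_apply, show X 0 = x₀ from hX0]

theorem hasDerivWithinAt_integral_Icc {a b t : ℝ} {q : ℝ → ℝ} (hq : ContinuousOn q (Icc a b))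
    (ht : t ∈ Icc a b) : HasDerivWithinAt (fun u => ∫ s in a..u, q s) (q t) (Icc a b) t := by
  have : Fact (t ∈ Icc a b) := ⟨ht⟩
  exact intervalIntegral.integral_hasDerivWithinAt_right
    (hq.mono (uIcc_subset_Icc (left_mem_Icc.2 (ht.1.trans ht.2)) ht)).intervalIntegrable
    (hq.stronglyMeasurableAtFilter_nhdsWithin measurableSet_Icc t) (hq t ht)

theorem eqOn_of_eq_integral_add {T Y₀ : ℝ} {L : ℝ≥0} {f : ℝ → ℝ → ℝ} {s : ℝ → Set ℝ}
    {Z Y₁ Y₂ : ℝ → ℝ} (hlip : ∀ t ∈ Icc 0 T, LipschitzOnWith L (f t) (s t))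
    (hf₁ : ContinuousOn (fun t => f t (Y₁ t)) (Icc 0 T))
    (hf₂ : ContinuousOn (fun t => f t (Y₂ t)) (Icc 0 T))
    (hs₁ : ∀ t ∈ Icc 0 T, Y₁ t ∈ s t) (hs₂ : ∀ t ∈ Icc 0 T, Y₂ t ∈ s t)
    (hY₁ : ∀ t ∈ Icc 0 T, Y₁ t = Y₀ + (∫ r in 0..t, f r (Y₁ r)) + Z t)
    (hY₂ : ∀ t ∈ Icc 0 T, Y₂ t = Y₀ + (∫ r in 0..t, f r (Y₂ r)) + Z t) :
    EqOn Y₁ Y₂ (Icc 0 T) := by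
  set q := fun t => f t (Y₂ t) - f t (Y₁ t)
  have hq : ContinuousOn q (Icc 0 T) := hf₂.sub hf₁
  have hG : ∀ t ∈ Icc 0 T, (∫ r in 0..t, q r) = Y₂ t - Y₁ t := fun t ht => by
    have hsub : uIcc 0 t ⊆ Icc 0 T := uIcc_subset_Icc (left_mem_Icc.2 (ht.1.trans ht.2)) ht
    rw [intervalIntegral.integral_sub (hf₂.mono hsub).intervalIntegrable
      (hf₁.mono hsub).intervalIntegrable, hY₁ t ht, hY₂ t ht]
    ring
  have hzero := eq_zero_of_abs_deriv_le_mul_abs_self_of_eq_zero_right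
    (f := fun t => ∫ r in 0..t, q r) (K := L)
    (fun t ht => (hasDerivWithinAt_integral_Icc hq ht).continuousWithinAt)
    (fun t ht => (hasDerivWithinAt_integral_Icc hq (Ico_subset_Icc_self ht)).mono_of_mem_nhdsWithin
      (mem_of_superset (Icc_mem_nhdsGE ht.2) (Icc_subset_Icc_left ht.1)))
    intervalIntegral.integral_same fun t ht => by
      have ht' := Ico_subset_Icc_self ht
      simpa only [Real.norm_eq_abs, hG t ht', q, Real.dist_eq] using
        (hlip t ht').dist_le_mul _ (hs₂ t ht') _ (hs₁ t ht')
  exact fun t ht => by linarith [hzero t ht, hG t ht]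

theorem exists_eq_integral_clampIcc_add {T ε Y₀ : ℝ} {L : ℝ≥0} {phi psi Z : ℝ → ℝ}
    {b : ℝ → ℝ → ℝ} (hT : 0 ≤ T) (hphi : ContinuousOn phi (Icc 0 T))
    (hpsi : ContinuousOn psi (Icc 0 T)) (hZ : ContinuousOn Z (Icc 0 T)) (hε : 0 < ε)
    (hband : ∀ t ∈ Icc 0 T, phi t + ε ≤ psi t - ε)
    (hb : ContinuousOn (fun q : ℝ × ℝ => b q.1 q.2)
      {q : ℝ × ℝ | q.1 ∈ Icc 0 T ∧ phi q.1 < q.2 ∧ q.2 < psi q.1})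
    (hL : ∀ t ∈ Icc 0 T, LipschitzOnWith L (b t) (Icc (phi t + ε) (psi t - ε))) :
    ∃ Y : ℝ → ℝ, ContinuousOn Y (Icc 0 T) ∧ ∀ t ∈ Icc 0 T,
      Y t = Y₀ + (∫ s in 0..t, b s (clampIcc (phi s + ε) (psi s - ε) (Y s))) + Z t := by
  set g : ℝ → ℝ → ℝ := fun t x => b t (clampIcc (phi t + ε) (psi t - ε) (x + Z t))
  have hmem : ∀ t ∈ Icc 0 T, ∀ y,
      clampIcc (phi t + ε) (psi t - ε) y ∈ Icc (phi t + ε) (psi t - ε) :=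
    fun t ht _ => clampIcc_mem_Icc (hband t ht)
  have hfst : ∀ {f : ℝ → ℝ}, ContinuousOn f (Icc 0 T) →
      ContinuousOn (fun q : ℝ × ℝ => f q.1) (Icc 0 T ×ˢ univ) :=
    fun hf => hf.comp continuousOn_fst fun q hq => hq.1
  have hF : ContinuousOn
      (fun q : ℝ × ℝ => (q.1, clampIcc (phi q.1 + ε) (psi q.1 - ε) (q.2 + Z q.1)))
      (Icc 0 T ×ˢ univ) :=
    continuousOn_fst.prodMk (((hfst hphi).add continuousOn_const).clampIcc
      ((hfst hpsi).sub continuousOn_const) (continuousOn_snd.add (hfst hZ)))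
  have hg : ContinuousOn (Function.uncurry g) (Icc 0 T ×ˢ univ) :=
    hb.comp hF fun q (hq : q ∈ Icc 0 T ×ˢ univ) =>
      ⟨hq.1, by linarith [(hmem q.1 hq.1 (q.2 + Z q.1)).1],
        by linarith [(hmem q.1 hq.1 (q.2 + Z q.1)).2]⟩
  have hglip : ∀ t ∈ Icc 0 T, LipschitzWith L (g t) := fun t ht =>
    LipschitzWith.of_dist_le_mul fun x y => calc
      dist (g t x) (g t y) ≤ L * dist (clampIcc (phi t + ε) (psi t - ε) (x + Z t))
          (clampIcc (phi t + ε) (psi t - ε) (y + Z t)) :=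
        (hL t ht).dist_le_mul _ (hmem t ht _) _ (hmem t ht _)
      _ ≤ L * dist x y := by
        gcongr
        simpa using lipschitzWith_clampIcc.dist_le_mul (x + Z t) (y + Z t)
  obtain ⟨C, hC⟩ := exists_forall_norm_le_of_band hphi hpsi hε hb
  obtain ⟨X, hX, hXeq⟩ := exists_eq_integral_of_lipschitzWith hT Y₀ hg hglip
    fun t ht x => hC t ht _ (hmem t ht _)
  exact ⟨X + Z, hX.add hZ, fun t ht => by simp only [Pi.add_apply, hXeq t ht, g]⟩

theorem two_mul_lt_sub_of_rpow_bounds {f : ℝ → ℝ} {lo hi c ystar gam : ℝ} (hc : 0 < c)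
    (hlohi : lo < hi)
    (hlow : ∀ y, lo < y → y ≤ lo + ystar → y < hi → c / (y - lo) ^ gam ≤ f y)
    (hup : ∀ y, hi - ystar ≤ y → y < hi → lo < y → f y ≤ -(c / (hi - y) ^ gam)) :
    2 * ystar < hi - lo := by
  by_contra! h
  have h1 := hlow ((lo + hi) / 2) (by linarith) (by linarith) (by linarith)
  have h2 := hup ((lo + hi) / 2) (by linarith) (by linarith) (by linarith)
  have h3 : 0 < c / ((lo + hi) / 2 - lo) ^ gam :=
    div_pos hc (Real.rpow_pos_of_pos (by linarith) _)
  have h4 : 0 < c / (hi - (lo + hi) / 2) ^ gam :=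
    div_pos hc (Real.rpow_pos_of_pos (by linarith) _)
  linarith

def PushesInward (T δ A : ℝ) (phi psi : ℝ → ℝ) (b : ℝ → ℝ → ℝ) : Prop :=
  ∀ t ∈ Icc (0:ℝ) T, ∀ y, phi t < y → y < psi t →
    (y - phi t ≤ δ → A ≤ b t y) ∧ (psi t - y ≤ δ → b t y ≤ -A)

theorem pushesInward_of_rpow_bounds {T δ c ystar gam : ℝ} {phi psi : ℝ → ℝ}
    {b : ℝ → ℝ → ℝ} (hc : 0 ≤ c) (hgam : 0 ≤ gam) (hδ : δ ≤ ystar)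
    (hlow : ∀ t ∈ Icc (0:ℝ) T, ∀ y : ℝ, phi t < y → y ≤ phi t + ystar → y < psi t →
      c / (y - phi t) ^ gam ≤ b t y)
    (hup : ∀ t ∈ Icc (0:ℝ) T, ∀ y : ℝ, psi t - ystar ≤ y → y < psi t → phi t < y →
      b t y ≤ -(c / (psi t - y) ^ gam)) :
    PushesInward T δ (c / δ ^ gam) phi psi b := by
  intro t ht y h1 h2
  refine ⟨fun h3 => ?_, fun h3 => ?_⟩
  · calc c / δ ^ gam ≤ c / (y - phi t) ^ gam := by gcongr
      _ ≤ b t y := hlow t ht y h1 (by linarith) h2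
  · have : c / δ ^ gam ≤ c / (psi t - y) ^ gam := by gcongr
    linarith [hup t ht y (by linarith) h2 h1]

theorem PushesInward.comp_clampIcc {T δ A t : ℝ} {phi psi : ℝ → ℝ} {b : ℝ → ℝ → ℝ}
    (hpush : PushesInward T δ A phi psi b) (hδ : 0 < δ) (ht : t ∈ Icc 0 T)
    (hwide : δ ≤ psi t - phi t) (y : ℝ) :
    phi t < clampIcc (phi t + δ / 2) (psi t - δ / 2) y ∧
      clampIcc (phi t + δ / 2) (psi t - δ / 2) y < psi t ∧
      (y - phi t ≤ δ → A ≤ b t (clampIcc (phi t + δ / 2) (psi t - δ / 2) y)) ∧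
      (psi t - y ≤ δ → b t (clampIcc (phi t + δ / 2) (psi t - δ / 2) y) ≤ -A) := by
  have hmem := clampIcc_mem_Icc (y := y) (by linarith : phi t + δ / 2 ≤ psi t - δ / 2)
  have hlt : phi t < clampIcc (phi t + δ / 2) (psi t - δ / 2) y := by linarith [hmem.1]
  have hgt : clampIcc (phi t + δ / 2) (psi t - δ / 2) y < psi t := by linarith [hmem.2]
  refine ⟨hlt, hgt, fun hy => (hpush t ht _ hlt hgt).1 ?_, fun hy => (hpush t ht _ hlt hgt).2 ?_⟩
  · linarith [clampIcc_le_max (lo := phi t + δ / 2) (hi := psi t - δ / 2) (y := y),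
      max_le (by linarith : phi t + δ / 2 ≤ phi t + δ) (by linarith : y ≤ phi t + δ)]
  · linarith [min_le_clampIcc (lo := phi t + δ / 2) (hi := psi t - δ / 2) (y := y),
      le_min (by linarith : psi t - δ ≤ psi t - δ / 2) (by linarith : psi t - δ ≤ y)]

theorem exists_lipschitzOnWith_band {T lam c₁ p M η : ℝ} {phi psi : ℝ → ℝ} {b : ℝ → ℝ → ℝ}
    (hlam : 0 < lam) (hM : 0 < M) (hη : 0 < η)
    (hb : ∀ ε : ℝ, 0 < ε → ε < M →
      ∀ t1 ∈ Icc (0:ℝ) T, ∀ t2 ∈ Icc (0:ℝ) T, ∀ y1 y2 : ℝ,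
        phi t1 + ε < y1 → y1 < psi t1 - ε → phi t2 + ε < y2 → y2 < psi t2 - ε →
        |b t1 y1 - b t2 y2| ≤ c₁ / ε ^ p * (|y1 - y2| + |t1 - t2| ^ lam)) :
    ∃ L : ℝ≥0, ∀ t ∈ Icc 0 T, LipschitzOnWith L (b t) (Icc (phi t + η) (psi t - η)) := by
  set ε := min M η / 2
  have hε : 0 < ε := by positivity
  have hεM : ε < M := (half_lt_self (lt_min hM hη)).trans_le (min_le_left _ _)
  have hεη : ε < η := (half_lt_self (lt_min hM hη)).trans_le (min_le_right _ _)
  refine ⟨(c₁ / ε ^ p).toNNReal, fun t ht =>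
    LipschitzOnWith.of_dist_le' fun y1 hy1 y2 hy2 => ?_⟩
  simpa [Real.dist_eq, Real.zero_rpow hlam.ne'] using hb ε hε hεM t ht t ht y1 y2
    (by linarith [hy1.1]) (by linarith [hy1.2]) (by linarith [hy2.1]) (by linarith [hy2.2])

theorem iSup_abs_sub_pos {T : ℝ} {f g : ℝ → ℝ} (hT : 0 ≤ T) (hf : ContinuousOn f (Icc 0 T))
    (hg : ContinuousOn g (Icc 0 T)) (h0 : f 0 < g 0) :
    0 < ⨆ t : Icc (0:ℝ) T, |g t - f t| := by
  have hbdd : BddAbove (range fun t : Icc (0:ℝ) T => |g t - f t|) := by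
    simpa only [image_eq_range] using
      isCompact_Icc.bddAbove_image (f := fun t => |g t - f t|) (hg.sub hf).abs
  exact (abs_pos.2 (sub_pos.2 h0).ne').trans_le (le_ciSup hbdd ⟨0, left_mem_Icc.2 hT⟩)

def IsPathwiseSolution (T Y₀ : ℝ) (phi psi Z : ℝ → ℝ) (b : ℝ → ℝ → ℝ) (Y : ℝ → ℝ) : Prop :=
  ContinuousOn Y (Icc (0:ℝ) T) ∧ (∀ t ∈ Icc (0:ℝ) T, phi t < Y t ∧ Y t < psi t) ∧
    ∀ t ∈ Icc (0:ℝ) T, Y t = Y₀ + (∫ s in (0:ℝ)..t, b s (Y s)) + Z t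

namespace IsPathwiseSolution

variable {T Y₀ lam K Λ δ A : ℝ} {phi psi Z Y : ℝ → ℝ} {b : ℝ → ℝ → ℝ}

theorem continuousOn_drift (hY : IsPathwiseSolution T Y₀ phi psi Z b Y)
    (hb : ContinuousOn (fun q : ℝ × ℝ => b q.1 q.2)
      {q : ℝ × ℝ | q.1 ∈ Icc (0:ℝ) T ∧ phi q.1 < q.2 ∧ q.2 < psi q.1}) :
    ContinuousOn (fun t => b t (Y t)) (Icc 0 T) :=
  hb.comp (continuousOn_id.prodMk hY.1) fun t ht => ⟨ht, hY.2.1 t ht⟩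

theorem margin (hY : IsPathwiseSolution T Y₀ phi psi Z b Y) (hT : 0 ≤ T) (hlam : 0 < lam)
    (hphi : HolderOnIcc T K lam phi) (hpsi : HolderOnIcc T K lam psi)
    (hZ : HolderOnIcc T Λ lam Z) (hZ0 : Z 0 = 0)
    (hb : ContinuousOn (fun q : ℝ × ℝ => b q.1 q.2)
      {q : ℝ × ℝ | q.1 ∈ Icc (0:ℝ) T ∧ phi q.1 < q.2 ∧ q.2 < psi q.1})
    (hpush : PushesInward T δ A phi psi b)
    (hAB : ∀ h, 0 < h → (K + Λ) * h ^ lam ≤ A * h + δ / 2) (hδ : 0 ≤ δ)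
    (h0 : phi 0 + δ ≤ Y₀ ∧ Y₀ ≤ psi 0 - δ) :
    ∀ t ∈ Icc 0 T, Y t ∈ Icc (phi t + δ / 2) (psi t - δ / 2) := by
  have hY0 : Y 0 = Y₀ := by simpa [hZ0] using hY.2.2 0 (left_mem_Icc.2 hT)
  exact margin_of_eq_integral_add hlam hphi hpsi hZ hY.1
    ((hY.continuousOn_drift hb).intervalIntegrable_of_Icc hT) (hY0 ▸ hY.2.2)
    (fun t ht => (hpush t ht _ (hY.2.1 t ht).1 (hY.2.1 t ht).2).1)
    (fun t ht => (hpush t ht _ (hY.2.1 t ht).1 (hY.2.1 t ht).2).2) hAB hδ (hY0 ▸ h0)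

end IsPathwiseSolution

theorem exists_isPathwiseSolution {T Y₀ lam K Λ δ A : ℝ} {L : ℝ≥0} {phi psi Z : ℝ → ℝ}
    {b : ℝ → ℝ → ℝ} (hT : 0 ≤ T) (hlam : 0 < lam)
    (hphi : HolderOnIcc T K lam phi) (hpsi : HolderOnIcc T K lam psi)
    (hZ : HolderOnIcc T Λ lam Z) (hZ0 : Z 0 = 0)
    (hb : ContinuousOn (fun q : ℝ × ℝ => b q.1 q.2)
      {q : ℝ × ℝ | q.1 ∈ Icc (0:ℝ) T ∧ phi q.1 < q.2 ∧ q.2 < psi q.1})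
    (hwide : ∀ t ∈ Icc 0 T, δ ≤ psi t - phi t) (hδ : 0 < δ)
    (hL : ∀ t ∈ Icc 0 T, LipschitzOnWith L (b t) (Icc (phi t + δ / 2) (psi t - δ / 2)))
    (hpush : PushesInward T δ A phi psi b)
    (hAB : ∀ h, 0 < h → (K + Λ) * h ^ lam ≤ A * h + δ / 2)
    (h0 : phi 0 + δ ≤ Y₀ ∧ Y₀ ≤ psi 0 - δ) :
    ∃ Y, IsPathwiseSolution T Y₀ phi psi Z b Y := by
  have hphiC := hphi.continuousOn hlam
  have hpsiC := hpsi.continuousOn hlam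
  obtain ⟨Y, hYc, hYeq⟩ := exists_eq_integral_clampIcc_add (Y₀ := Y₀) hT hphiC hpsiC
    (hZ.continuousOn hlam) (half_pos hδ) (fun t ht => by linarith [hwide t ht]) hb hL
  have hcl := fun t (ht : t ∈ Icc 0 T) => hpush.comp_clampIcc hδ ht (hwide t ht) (Y t)
  have hdrift : ContinuousOn
      (fun t => b t (clampIcc (phi t + δ / 2) (psi t - δ / 2) (Y t))) (Icc 0 T) :=
    hb.comp (continuousOn_id.prodMk ((hphiC.add continuousOn_const).clampIcc
      (hpsiC.sub continuousOn_const) hYc)) fun t ht => ⟨ht, (hcl t ht).1, (hcl t ht).2.1⟩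
  have hY0 : Y 0 = Y₀ := by simpa [hZ0] using hYeq 0 (left_mem_Icc.2 hT)
  have hm := margin_of_eq_integral_add hlam hphi hpsi hZ hYc
    (hdrift.intervalIntegrable_of_Icc hT) (hY0 ▸ hYeq) (fun t ht => (hcl t ht).2.2.1)
    (fun t ht => (hcl t ht).2.2.2) hAB hδ.le (hY0 ▸ h0)
  refine ⟨Y, hYc, fun t ht => ⟨by linarith [(hm t ht).1], by linarith [(hm t ht).2]⟩,
    fun t ht => ?_⟩
  rw [hYeq t ht, intervalIntegral.integral_congr fun s hs =>
    congrArg (b s) (clampIcc_of_mem (hm s (uIcc_subset_Icc (left_mem_Icc.2 hT) ht hs)))]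

theorem stmt_0_general
    (T lam : ℝ) (hT : 0 < T) (hlam : lam ∈ Set.Ioo (0:ℝ) 1)
    (phi psi : ℝ → ℝ) (K : ℝ)
    (hphiH : ∀ s ∈ Set.Icc (0:ℝ) T, ∀ t ∈ Set.Icc (0:ℝ) T, |phi t - phi s| ≤ K * |t - s| ^ lam)
    (hpsiH : ∀ s ∈ Set.Icc (0:ℝ) T, ∀ t ∈ Set.Icc (0:ℝ) T, |psi t - psi s| ≤ K * |t - s| ^ lam)
    (hphipsi : ∀ t ∈ Set.Icc (0:ℝ) T, phi t < psi t)
    (b : ℝ → ℝ → ℝ) (c1 p c2 ystar gam : ℝ)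
    (hc2 : 0 < c2) (hystar : 0 < ystar)
    (hgam : 1 / lam - 1 < gam)
    (hB2cont : ContinuousOn (fun q : ℝ × ℝ => b q.1 q.2)
      {q : ℝ × ℝ | q.1 ∈ Set.Icc (0:ℝ) T ∧ phi q.1 < q.2 ∧ q.2 < psi q.1})
    (hB2lip : ∀ ε : ℝ, 0 < ε → ε < min 1 ((⨆ t : Set.Icc (0:ℝ) T, |psi t.1 - phi t.1|) / 2) →
      ∀ t1 ∈ Set.Icc (0:ℝ) T, ∀ t2 ∈ Set.Icc (0:ℝ) T, ∀ y1 y2 : ℝ,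
        phi t1 + ε < y1 → y1 < psi t1 - ε → phi t2 + ε < y2 → y2 < psi t2 - ε →
        |b t1 y1 - b t2 y2| ≤ c1 / ε ^ p * (|y1 - y2| + |t1 - t2| ^ lam))
    (hB3low : ∀ t ∈ Set.Icc (0:ℝ) T, ∀ y : ℝ, phi t < y → y ≤ phi t + ystar → y < psi t →
      c2 / (y - phi t) ^ gam ≤ b t y)
    (hB3up : ∀ t ∈ Set.Icc (0:ℝ) T, ∀ y : ℝ, psi t - ystar ≤ y → y < psi t → phi t < y →
      b t y ≤ -(c2 / (psi t - y) ^ gam))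
    (Y0 : ℝ) (hB1 : phi 0 < Y0 ∧ Y0 < psi 0)
    (Z : ℝ → ℝ) (Lam : ℝ) (hZ0 : Z 0 = 0)
    (hZH : ∀ s ∈ Set.Icc (0:ℝ) T, ∀ t ∈ Set.Icc (0:ℝ) T, |Z t - Z s| ≤ Lam * |t - s| ^ lam)
    :
    ∃ Y : ℝ → ℝ,
      (ContinuousOn Y (Set.Icc (0:ℝ) T) ∧
        (∀ t ∈ Set.Icc (0:ℝ) T, phi t < Y t ∧ Y t < psi t) ∧
        (∀ t ∈ Set.Icc (0:ℝ) T, Y t = Y0 + (∫ s in (0:ℝ)..t, b s (Y s)) + Z t)) ∧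
      ∀ Y2 : ℝ → ℝ,
        (ContinuousOn Y2 (Set.Icc (0:ℝ) T) ∧
          (∀ t ∈ Set.Icc (0:ℝ) T, phi t < Y2 t ∧ Y2 t < psi t) ∧
          (∀ t ∈ Set.Icc (0:ℝ) T, Y2 t = Y0 + (∫ s in (0:ℝ)..t, b s (Y2 s)) + Z t)) →
        ∀ t ∈ Set.Icc (0:ℝ) T, Y2 t = Y t := by
  have hwide : ∀ t ∈ Icc 0 T, 2 * ystar < psi t - phi t := fun t ht =>
    two_mul_lt_sub_of_rpow_bounds hc2 (hphipsi t ht) (hB3low t ht) (hB3up t ht)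
  obtain ⟨δ, hAB, hδ, hδy, hδl, hδu⟩ :=
    ((eventually_mul_rpow_le_div_rpow_mul_add hlam hgam hc2 (K + Lam)).and
      (eventually_mem_nhdsWithin.and (eventually_nhdsWithin_of_eventually_nhds
        (eventually_le_nhds (lt_min hystar (lt_min (sub_pos.2 hB1.1) (sub_pos.2 hB1.2)))))))
      |>.exists.imp fun _ h => by simpa only [mem_Ioi, le_min_iff] using h
  have h0 : phi 0 + δ ≤ Y0 ∧ Y0 ≤ psi 0 - δ := ⟨by linarith, by linarith⟩
  have hpush := pushesInward_of_rpow_bounds hc2.le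
    (by linarith [one_lt_one_div hlam.1 hlam.2]) hδy hB3low hB3up
  obtain ⟨L, hL⟩ := exists_lipschitzOnWith_band hlam.1 (lt_min one_pos (half_pos
    (iSup_abs_sub_pos hT.le (HolderOnIcc.continuousOn hphiH hlam.1)
      (HolderOnIcc.continuousOn hpsiH hlam.1) (hphipsi 0 (left_mem_Icc.2 hT.le)))))
    (half_pos hδ) hB2lip
  have hmargin := fun Y (hY : IsPathwiseSolution T Y0 phi psi Z b Y) =>
    hY.margin hT.le hlam.1 hphiH hpsiH hZH hZ0 hB2cont hpush hAB hδ.le h0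
  obtain ⟨Y, hY⟩ := exists_isPathwiseSolution hT.le hlam.1 hphiH hpsiH hZH hZ0 hB2cont
    (fun t ht => by linarith [hwide t ht]) hδ hL hpush hAB h0
  refine ⟨Y, hY, fun Y₂ (hY₂ : IsPathwiseSolution T Y0 phi psi Z b Y₂) => ?_⟩
  exact (eqOn_of_eq_integral_add hL (hY.continuousOn_drift hB2cont)
    (hY₂.continuousOn_drift hB2cont) (hmargin Y hY) (hmargin Y₂ hY₂) hY.2.2 hY₂.2.2).symm

theorem stmt_0
    (T lam : ℝ) (hT : 0 < T) (hlam : lam ∈ Set.Ioo (0:ℝ) 1)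
    (phi psi : ℝ → ℝ) (K : ℝ) (hK : 0 < K)
    (hphiH : ∀ s ∈ Set.Icc (0:ℝ) T, ∀ t ∈ Set.Icc (0:ℝ) T, |phi t - phi s| ≤ K * |t - s| ^ lam)
    (hpsiH : ∀ s ∈ Set.Icc (0:ℝ) T, ∀ t ∈ Set.Icc (0:ℝ) T, |psi t - psi s| ≤ K * |t - s| ^ lam)
    (hphipsi : ∀ t ∈ Set.Icc (0:ℝ) T, phi t < psi t)
    (b : ℝ → ℝ → ℝ) (c1 p c2 ystar gam : ℝ)
    (hc1 : 0 < c1) (hp : 1 < p) (hc2 : 0 < c2) (hystar : 0 < ystar)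
    (hgam : 1 / lam - 1 < gam)
    (hB2cont : ContinuousOn (fun q : ℝ × ℝ => b q.1 q.2)
      {q : ℝ × ℝ | q.1 ∈ Set.Icc (0:ℝ) T ∧ phi q.1 < q.2 ∧ q.2 < psi q.1})
    (hB2lip : ∀ ε : ℝ, 0 < ε → ε < min 1 ((⨆ t : Set.Icc (0:ℝ) T, |psi t.1 - phi t.1|) / 2) →
      ∀ t1 ∈ Set.Icc (0:ℝ) T, ∀ t2 ∈ Set.Icc (0:ℝ) T, ∀ y1 y2 : ℝ,
        phi t1 + ε < y1 → y1 < psi t1 - ε → phi t2 + ε < y2 → y2 < psi t2 - ε →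
        |b t1 y1 - b t2 y2| ≤ c1 / ε ^ p * (|y1 - y2| + |t1 - t2| ^ lam))
    (hB3low : ∀ t ∈ Set.Icc (0:ℝ) T, ∀ y : ℝ, phi t < y → y ≤ phi t + ystar → y < psi t →
      c2 / (y - phi t) ^ gam ≤ b t y)
    (hB3up : ∀ t ∈ Set.Icc (0:ℝ) T, ∀ y : ℝ, psi t - ystar ≤ y → y < psi t → phi t < y →
      b t y ≤ -(c2 / (psi t - y) ^ gam))
    (Y0 : ℝ) (hB1 : phi 0 < Y0 ∧ Y0 < psi 0)
    (Z : ℝ → ℝ) (Lam : ℝ) (hLam : 0 < Lam) (hZ0 : Z 0 = 0)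
    (hZH : ∀ s ∈ Set.Icc (0:ℝ) T, ∀ t ∈ Set.Icc (0:ℝ) T, |Z t - Z s| ≤ Lam * |t - s| ^ lam)
    :
    ∃ Y : ℝ → ℝ,
      (ContinuousOn Y (Set.Icc (0:ℝ) T) ∧
        (∀ t ∈ Set.Icc (0:ℝ) T, phi t < Y t ∧ Y t < psi t) ∧
        (∀ t ∈ Set.Icc (0:ℝ) T, Y t = Y0 + (∫ s in (0:ℝ)..t, b s (Y s)) + Z t)) ∧
      ∀ Y2 : ℝ → ℝ,
        (ContinuousOn Y2 (Set.Icc (0:ℝ) T) ∧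
          (∀ t ∈ Set.Icc (0:ℝ) T, phi t < Y2 t ∧ Y2 t < psi t) ∧
          (∀ t ∈ Set.Icc (0:ℝ) T, Y2 t = Y0 + (∫ s in (0:ℝ)..t, b s (Y2 s)) + Z t)) →
        ∀ t ∈ Set.Icc (0:ℝ) T, Y2 t = Y t :=
  stmt_0_general T lam hT hlam phi psi K hphiH hpsiH hphipsi b c1 p c2 ystar gam hc2 hystar hgam
    hB2cont hB2lip hB3low hB3up Y0 hB1 Z Lam hZ0 hZH
end

section
/- Under Assumptions (B2)–(B4), for every Δ > 0 with c3·Δ < 1, every t ∈ [0,T] and every z ∈ ℝ, the equation y − b(t,y)·Δ = z has a unique solution y with φ(t) < y < ψ(t). -/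
/-!
Since `∂b/∂y < c3` and `c3 Δ < 1`, the map `y ↦ y - b(t,y) Δ` has positive derivative on
`(φ(t), ψ(t))`, so it is strictly increasing. As `γ > 1/λ - 1 > 0`, (B3) makes `b(t,·)` blow up to
`+∞` at `φ(t)` and to `-∞` at `ψ(t)`, so the map runs from `-∞` to `+∞`, and the intermediate
value theorem gives a solution, which is unique by monotonicity.
-/

open Set Filter Topology

theorem Filter.Tendsto.div_rpow_nhdsGT_zero {α : Type*} {l : Filter α} {u : α → ℝ}
    (hu : Tendsto u l (𝓝[>] 0)) {κ γ : ℝ} (hκ : 0 < κ) (hγ : 0 < γ) :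
    Tendsto (fun x => κ / u x ^ γ) l atTop := by
  have hpow : Tendsto (fun x : ℝ => x ^ (-γ)) (𝓝[>] 0) atTop :=
    tendsto_rpow_neg_nhdsGT_zero (neg_neg_of_pos hγ)
  refine ((hpow.const_mul_atTop hκ).comp hu).congr' ?_
  filter_upwards [hu.eventually self_mem_nhdsWithin] with x hx
  simp [Real.rpow_neg (le_of_lt hx), div_eq_mul_inv]

theorem tendsto_sub_nhdsGT_zero (a : ℝ) : Tendsto (fun y => y - a) (𝓝[>] a) (𝓝[>] 0) := by
  refine tendsto_nhdsWithin_of_tendsto_nhds_of_eventually_within _ ?_ ?_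
  · exact ((continuous_id.sub continuous_const).tendsto' a 0 (sub_self a)).mono_left
      nhdsWithin_le_nhds
  · filter_upwards [self_mem_nhdsWithin] with y (hy : a < y) using sub_pos.2 hy

theorem tendsto_const_sub_nhdsGT_zero (b : ℝ) : Tendsto (fun y => b - y) (𝓝[<] b) (𝓝[>] 0) := by
  refine tendsto_nhdsWithin_of_tendsto_nhds_of_eventually_within _ ?_ ?_
  · exact ((continuous_const.sub continuous_id).tendsto' b 0 (sub_self b)).mono_left
      nhdsWithin_le_nhds
  · filter_upwards [self_mem_nhdsWithin] with y (hy : y < b) using sub_pos.2 hy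

section ImplicitStep

variable {g : ℝ → ℝ} {a b κ γ Δ : ℝ}

theorem tendsto_sub_mul_nhdsGT_atBot (hκ : 0 < κ) (hγ : 0 < γ) (hΔ : 0 < Δ)
    (hg : ∀ᶠ y in 𝓝[>] a, κ / (y - a) ^ γ ≤ g y) :
    Tendsto (fun y => y - g y * Δ) (𝓝[>] a) atBot := by
  have hg_top : Tendsto g (𝓝[>] a) atTop :=
    tendsto_atTop_mono' _ hg ((tendsto_sub_nhdsGT_zero a).div_rpow_nhdsGT_zero hκ hγ)
  have hid : Tendsto (fun y : ℝ => y) (𝓝[>] a) (𝓝 a) := nhdsWithin_le_nhds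
  simpa only [sub_eq_add_neg, Function.comp_def] using
    hid.add_atBot (tendsto_neg_atTop_atBot.comp (hg_top.atTop_mul_const hΔ))

theorem tendsto_sub_mul_nhdsLT_atTop (hκ : 0 < κ) (hγ : 0 < γ) (hΔ : 0 < Δ)
    (hg : ∀ᶠ y in 𝓝[<] b, g y ≤ -(κ / (b - y) ^ γ)) :
    Tendsto (fun y => y - g y * Δ) (𝓝[<] b) atTop := by
  have hg_bot : Tendsto g (𝓝[<] b) atBot := tendsto_atBot_mono' _ hg
    (tendsto_neg_atTop_atBot.comp ((tendsto_const_sub_nhdsGT_zero b).div_rpow_nhdsGT_zero hκ hγ))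
  have hid : Tendsto (fun y : ℝ => y) (𝓝[<] b) (𝓝 b) := nhdsWithin_le_nhds
  simpa only [sub_eq_add_neg, Function.comp_def] using
    hid.add_atTop (tendsto_neg_atBot_atTop.comp (hg_bot.atBot_mul_const hΔ))

theorem strictMonoOn_sub_mul_of_hasDerivAt {g' : ℝ → ℝ} {c : ℝ} (hΔ : 0 < Δ) (hcΔ : c * Δ < 1)
    (hg : ∀ y ∈ Ioo a b, HasDerivAt g (g' y) y) (hg' : ∀ y ∈ Ioo a b, g' y < c) :
    StrictMonoOn (fun y => y - g y * Δ) (Ioo a b) := by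
  have hf : ∀ y ∈ Ioo a b, HasDerivAt (fun y => y - g y * Δ) (1 - g' y * Δ) y :=
    fun y hy => (hasDerivAt_id y).sub ((hg y hy).mul_const Δ)
  refine strictMonoOn_of_hasDerivWithinAt_pos (f' := fun y => 1 - g' y * Δ)
    (convex_Ioo a b) (fun y hy => (hf y hy).continuousAt.continuousWithinAt)
    (fun y hy => ?_) (fun y hy => ?_)
  · rw [interior_Ioo] at hy ⊢
    exact (hf y hy).hasDerivWithinAt
  · rw [interior_Ioo] at hy
    nlinarith [hg' y hy]

end ImplicitStep

theorem existsUnique_eq_of_strictMonoOn_Ioo {f : ℝ → ℝ} {a b : ℝ} (hab : a < b)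
    (hmono : StrictMonoOn f (Ioo a b)) (hcont : ContinuousOn f (Ioo a b))
    (hbot : Tendsto f (𝓝[>] a) atBot) (htop : Tendsto f (𝓝[<] b) atTop) (z : ℝ) :
    ∃! y, a < y ∧ y < b ∧ f y = z := by
  obtain ⟨y₁, hy₁, hfy₁⟩ :=
    (Eventually.and (Ioo_mem_nhdsGT hab) (hbot.eventually_le_atBot z)).exists
  obtain ⟨y₂, hy₂, hfy₂⟩ :=
    (Eventually.and (Ioo_mem_nhdsLT hab) (htop.eventually_ge_atTop z)).exists
  have hsub : uIcc y₁ y₂ ⊆ Ioo a b := ordConnected_Ioo.uIcc_subset hy₁ hy₂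
  obtain ⟨y, hy, rfl⟩ :=
    intermediate_value_uIcc (hcont.mono hsub) (mem_uIcc.2 (Or.inl ⟨hfy₁, hfy₂⟩))
  exact ⟨y, ⟨(hsub hy).1, (hsub hy).2, rfl⟩,
    fun y' hy' => hmono.injOn ⟨hy'.1, hy'.2.1⟩ (hsub hy) hy'.2.2⟩

theorem stmt_4_general
    (T lam : ℝ) (hlam : lam ∈ Set.Ioo (0:ℝ) 1)
    (phi psi : ℝ → ℝ)
    (hphipsi : ∀ t ∈ Set.Icc (0:ℝ) T, phi t < psi t)
    (b : ℝ → ℝ → ℝ) (c2 ystar gam : ℝ)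
    (hc2 : 0 < c2) (hystar : 0 < ystar)
    (hgam : 1 / lam - 1 < gam)
    (hB3low : ∀ t ∈ Set.Icc (0:ℝ) T, ∀ y : ℝ, phi t < y → y ≤ phi t + ystar → y < psi t →
      c2 / (y - phi t) ^ gam ≤ b t y)
    (hB3up : ∀ t ∈ Set.Icc (0:ℝ) T, ∀ y : ℝ, psi t - ystar ≤ y → y < psi t → phi t < y →
      b t y ≤ -(c2 / (psi t - y) ^ gam))
    (bp : ℝ → ℝ → ℝ) (c3 : ℝ)
    (hB4deriv : ∀ t ∈ Set.Icc (0:ℝ) T, ∀ y : ℝ, phi t < y → y < psi t →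
      HasDerivAt (fun x => b t x) (bp t y) y)
    (hB4lt : ∀ t ∈ Set.Icc (0:ℝ) T, ∀ y : ℝ, phi t < y → y < psi t → bp t y < c3)
    :
    ∀ Δ : ℝ, 0 < Δ → c3 * Δ < 1 → ∀ t ∈ Set.Icc (0:ℝ) T, ∀ z : ℝ,
      ∃! y : ℝ, phi t < y ∧ y < psi t ∧ y - b t y * Δ = z := by
  intro Δ hΔ hc3Δ t ht z
  have hgam_pos : 0 < gam := by
    have : 1 < 1 / lam := (one_lt_div hlam.1).2 hlam.2
    linarith
  have hb_deriv : ∀ y ∈ Ioo (phi t) (psi t), HasDerivAt (b t) (bp t y) y :=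
    fun y hy => hB4deriv t ht y hy.1 hy.2
  have hb_cont : ContinuousOn (b t) (Ioo (phi t) (psi t)) :=
    fun y hy => (hb_deriv y hy).continuousAt.continuousWithinAt
  refine existsUnique_eq_of_strictMonoOn_Ioo (hphipsi t ht)
    (strictMonoOn_sub_mul_of_hasDerivAt hΔ hc3Δ hb_deriv fun y hy => hB4lt t ht y hy.1 hy.2)
    (continuousOn_id.sub (hb_cont.mul continuousOn_const))
    (tendsto_sub_mul_nhdsGT_atBot hc2 hgam_pos hΔ ?_)
    (tendsto_sub_mul_nhdsLT_atTop hc2 hgam_pos hΔ ?_) z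
  · filter_upwards [Ioo_mem_nhdsGT (lt_min (hphipsi t ht) (lt_add_of_pos_right _ hystar))]
      with y hy
    exact hB3low t ht y hy.1 (hy.2.le.trans (min_le_right _ _)) (hy.2.trans_le (min_le_left _ _))
  · filter_upwards [Ioo_mem_nhdsLT (max_lt (hphipsi t ht) (sub_lt_self _ hystar))] with y hy
    exact hB3up t ht y ((le_max_right _ _).trans hy.1.le) hy.2 ((le_max_left _ _).trans_lt hy.1)

theorem stmt_4
    (T lam : ℝ) (hT : 0 < T) (hlam : lam ∈ Set.Ioo (0:ℝ) 1)
    (phi psi : ℝ → ℝ) (K : ℝ) (hK : 0 < K)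
    (hphiH : ∀ s ∈ Set.Icc (0:ℝ) T, ∀ t ∈ Set.Icc (0:ℝ) T, |phi t - phi s| ≤ K * |t - s| ^ lam)
    (hpsiH : ∀ s ∈ Set.Icc (0:ℝ) T, ∀ t ∈ Set.Icc (0:ℝ) T, |psi t - psi s| ≤ K * |t - s| ^ lam)
    (hphipsi : ∀ t ∈ Set.Icc (0:ℝ) T, phi t < psi t)
    (b : ℝ → ℝ → ℝ) (c1 p c2 ystar gam : ℝ)
    (hc1 : 0 < c1) (hp : 1 < p) (hc2 : 0 < c2) (hystar : 0 < ystar)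
    (hgam : 1 / lam - 1 < gam)
    (hB2cont : ContinuousOn (fun q : ℝ × ℝ => b q.1 q.2)
      {q : ℝ × ℝ | q.1 ∈ Set.Icc (0:ℝ) T ∧ phi q.1 < q.2 ∧ q.2 < psi q.1})
    (hB2lip : ∀ ε : ℝ, 0 < ε → ε < min 1 ((⨆ t : Set.Icc (0:ℝ) T, |psi t.1 - phi t.1|) / 2) →
      ∀ t1 ∈ Set.Icc (0:ℝ) T, ∀ t2 ∈ Set.Icc (0:ℝ) T, ∀ y1 y2 : ℝ,
        phi t1 + ε < y1 → y1 < psi t1 - ε → phi t2 + ε < y2 → y2 < psi t2 - ε →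
        |b t1 y1 - b t2 y2| ≤ c1 / ε ^ p * (|y1 - y2| + |t1 - t2| ^ lam))
    (hB3low : ∀ t ∈ Set.Icc (0:ℝ) T, ∀ y : ℝ, phi t < y → y ≤ phi t + ystar → y < psi t →
      c2 / (y - phi t) ^ gam ≤ b t y)
    (hB3up : ∀ t ∈ Set.Icc (0:ℝ) T, ∀ y : ℝ, psi t - ystar ≤ y → y < psi t → phi t < y →
      b t y ≤ -(c2 / (psi t - y) ^ gam))
    (bp : ℝ → ℝ → ℝ) (c3 : ℝ) (hc3 : 0 < c3)
    (hB4deriv : ∀ t ∈ Set.Icc (0:ℝ) T, ∀ y : ℝ, phi t < y → y < psi t →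
      HasDerivAt (fun x => b t x) (bp t y) y)
    (hB4cont : ContinuousOn (fun q : ℝ × ℝ => bp q.1 q.2)
      {q : ℝ × ℝ | q.1 ∈ Set.Icc (0:ℝ) T ∧ phi q.1 < q.2 ∧ q.2 < psi q.1})
    (hB4lt : ∀ t ∈ Set.Icc (0:ℝ) T, ∀ y : ℝ, phi t < y → y < psi t → bp t y < c3)
    :
    ∀ Δ : ℝ, 0 < Δ → c3 * Δ < 1 → ∀ t ∈ Set.Icc (0:ℝ) T, ∀ z : ℝ,
      ∃! y : ℝ, phi t < y ∧ y < psi t ∧ y - b t y * Δ = z :=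
  stmt_4_general T lam hlam phi psi hphipsi b c2 ystar gam hc2 hystar hgam hB3low hB3up bp c3
    hB4deriv hB4lt
end

section
/- Under Assumptions (B1)–(B4), there exist constants L1 > 0 and L2 > 0, depending only on Y(0), φ, ψ, the drift b (through c1, c2, p, y_*, γ), λ and T (in particular not on Z, Λ or N), such that for every noise path Z with Hölder constant Λ and every N with c3·Δ_N < 1, the drift-implicit Euler scheme satisfies φ(t_n) + L1/(L2 + Λ)^{1/(γλ+λ−1)} ≤ Ŷ(t_n) ≤ ψ(t_n) − L1/(L2 + Λ)^{1/(γλ+λ−1)} for all n = 0, 1, …, N. -/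
/-!
Write `D k = Ŷ(t_k) - φ(t_k)`. Then `D` moves by the drift `b(t_{k+1}, Ŷ(t_{k+1})) Δ_N` plus an
increment of `Z - φ`, which is `λ`-Hölder with constant `K + Λ`. While `D` stays below a level
`E ≤ y_*`, (B3) makes the drift at least `c₂ E^{-γ}` per unit time, and Young's inequality
`(K + Λ) τ^λ ≤ c₂ E^{-γ} τ + E / 2` (valid once `(K + Λ) E^{γλ+λ-1}` is small) shows that the
noise can never push `D` from `E` down below `E / 2`. Taking `E` a constant multiple of
`(K + Λ)^{-1/(γλ+λ-1)}` gives the lower bound; the upper bound is the same argument for the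
reflected scheme `-Ŷ` with lower barrier `-ψ`.
-/

theorem mul_rpow_le_mul_add_of_le {lam a M C τ : ℝ} (hlam0 : 0 ≤ lam) (hlam1 : lam ≤ 1)
    (ha : 0 ≤ a) (hM : 0 ≤ M) (hτ : 0 ≤ τ) (hC : C ≤ a ^ lam * M ^ (1 - lam)) :
    C * τ ^ lam ≤ a * τ + M := by
  have hamgm := Real.geom_mean_le_arith_mean2_weighted hlam0 (sub_nonneg.2 hlam1)
    (mul_nonneg ha hτ) hM (add_sub_cancel lam 1)
  calc C * τ ^ lam ≤ a ^ lam * M ^ (1 - lam) * τ ^ lam := by gcongr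
    _ = (a * τ) ^ lam * M ^ (1 - lam) := by rw [Real.mul_rpow ha hτ]; ring
    _ ≤ lam * (a * τ) + (1 - lam) * M := hamgm
    _ ≤ a * τ + M := by nlinarith [mul_nonneg ha hτ]

theorem le_rpow_mul_rpow_of_rpow_le {lam gam c2 C ε : ℝ} (hc2 : 0 ≤ c2) (hC : 0 < C)
    (hε : 0 < ε) (he : 0 < gam * lam + lam - 1)
    (hεc : ε ^ (gam * lam + lam - 1) ≤ c2 ^ lam / 2 ^ (1 - lam)) :
    C ≤ (c2 / (ε / C ^ (1 / (gam * lam + lam - 1))) ^ gam) ^ lam *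
      (ε / C ^ (1 / (gam * lam + lam - 1)) / 2) ^ (1 - lam) := by
  set e := gam * lam + lam - 1
  set E := ε / C ^ (1 / e)
  have hE : 0 < E := by positivity
  have hEe : E ^ e = ε ^ e / C := by
    rw [Real.div_rpow hε.le (by positivity), ← Real.rpow_mul hC.le, one_div_mul_cancel he.ne',
      Real.rpow_one]
  have hprod :
      (c2 / E ^ gam) ^ lam * (E / 2) ^ (1 - lam) = c2 ^ lam / 2 ^ (1 - lam) / E ^ e := by
    have hsplit : E ^ e = E ^ (gam * lam) / E ^ (1 - lam) := by
      rw [← Real.rpow_sub hE]; congr 1; ring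
    rw [Real.div_rpow hc2 (by positivity), Real.div_rpow hE.le (by norm_num),
      ← Real.rpow_mul hE.le, hsplit]
    field_simp
  rw [hprod, hEe, div_div_eq_mul_div, le_div_iff₀ (by positivity), mul_comm C]
  exact mul_le_mul_of_nonneg_right hεc hC.le

theorem sub_le_of_le_drift_of_noise_le {N : ℕ} {h β E M : ℝ} {D a G : ℕ → ℝ} (hh : 0 ≤ h)
    (hD0 : E ≤ D 0)
    (hrec : ∀ k < N, D (k + 1) = D k + a (k + 1) * h + (G (k + 1) - G k))
    (hdrift : ∀ k < N, D (k + 1) < E → β ≤ a (k + 1))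
    (hG : ∀ i j, i ≤ j → j ≤ N → G i - G j ≤ β * (((j : ℝ) - i) * h) + M) :
    ∀ n ≤ N, E - M ≤ D n := by
  -- `m` is the last time up to `n` with `E ≤ D m`; after `m` the drift is at least `β`.
  have hlast : ∀ n ≤ N, ∃ m ≤ n, E ≤ D m ∧
      D m + β * (((n : ℝ) - m) * h) + (G n - G m) ≤ D n := by
    intro n hn
    induction n with
    | zero => exact ⟨0, le_rfl, hD0, by simp⟩
    | succ k ih =>
      by_cases hk : E ≤ D (k + 1)
      · exact ⟨k + 1, le_rfl, hk, by simp⟩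
      obtain ⟨m, hmk, hEm, hm⟩ := ih (by omega)
      refine ⟨m, by omega, hEm, ?_⟩
      have hβ : β * h ≤ a (k + 1) * h :=
        mul_le_mul_of_nonneg_right (hdrift k (by omega) (not_le.1 hk)) hh
      rw [hrec k (by omega)]
      push_cast
      nlinarith
  intro n hn
  obtain ⟨m, hmn, hEm, hm⟩ := hlast n hn
  linarith [hG m n hmn hn]

theorem grid_mem_Icc {T : ℝ} {N k : ℕ} (hT : 0 ≤ T) (hk : k ≤ N) :
    (k : ℝ) * T / N ∈ Set.Icc 0 T := by
  rcases N.eq_zero_or_pos with rfl | hN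
  · simp [hT]
  refine ⟨by positivity, ?_⟩
  rw [div_le_iff₀ (by exact_mod_cast hN)]
  have : (k : ℝ) ≤ N := by exact_mod_cast hk
  nlinarith

theorem implicitEuler_lower_margin {T lam K Lam c2 ystar gam E : ℝ} {N : ℕ}
    {phi Z : ℝ → ℝ} {b : ℝ → ℝ → ℝ} {Yh : ℕ → ℝ}
    (hT : 0 ≤ T) (hlam0 : 0 ≤ lam) (hlam1 : lam ≤ 1) (hc2 : 0 ≤ c2) (hgam : 0 ≤ gam)
    (hE : 0 < E) (hEy : E ≤ ystar) (hE0 : E ≤ Yh 0 - phi 0)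
    (hyoung : K + Lam ≤ (c2 / E ^ gam) ^ lam * (E / 2) ^ (1 - lam))
    (hphiH : ∀ s ∈ Set.Icc (0:ℝ) T, ∀ t ∈ Set.Icc (0:ℝ) T,
      |phi t - phi s| ≤ K * |t - s| ^ lam)
    (hZH : ∀ s ∈ Set.Icc (0:ℝ) T, ∀ t ∈ Set.Icc (0:ℝ) T, |Z t - Z s| ≤ Lam * |t - s| ^ lam)
    (hsch : ∀ k : ℕ, k < N →
      phi (((k : ℝ) + 1) * T / (N : ℝ)) < Yh (k + 1) ∧
      Yh (k + 1) = Yh k + b (((k : ℝ) + 1) * T / (N : ℝ)) (Yh (k + 1)) * (T / (N : ℝ))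
        + (Z (((k : ℝ) + 1) * T / (N : ℝ)) - Z ((k : ℝ) * T / (N : ℝ))))
    (hbarrier : ∀ k : ℕ, k < N →
      Yh (k + 1) ≤ phi (((k : ℝ) + 1) * T / (N : ℝ)) + ystar →
      c2 / (Yh (k + 1) - phi (((k : ℝ) + 1) * T / (N : ℝ))) ^ gam
        ≤ b (((k : ℝ) + 1) * T / (N : ℝ)) (Yh (k + 1))) :
    ∀ n ≤ N, phi ((n : ℝ) * T / (N : ℝ)) + E / 2 ≤ Yh n := by
  set t : ℕ → ℝ := fun k => (k : ℝ) * T / N with ht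
  have hsucc : ∀ k : ℕ, ((k : ℝ) + 1) * T / N = t (k + 1) := by intro k; simp [ht]
  simp only [hsucc] at hsch hbarrier
  have hlow := sub_le_of_le_drift_of_noise_le (N := N) (h := T / N) (β := c2 / E ^ gam)
    (M := E / 2) (D := fun k => Yh k - phi (t k)) (a := fun k => b (t k) (Yh k))
    (G := fun k => Z (t k) - phi (t k)) (by positivity) (by simpa [ht] using hE0)
    (fun k hk => by linarith [(hsch k hk).2]) ?drift ?noise
  · intro n hn
    linarith [hlow n hn]
  case drift =>
    intro k hk hlt
    have hpos : 0 < Yh (k + 1) - phi (t (k + 1)) := by linarith [(hsch k hk).1]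
    refine le_trans ?_ (hbarrier k hk (by linarith))
    exact div_le_div_of_nonneg_left hc2 (by positivity)
      (Real.rpow_le_rpow hpos.le hlt.le hgam)
  case noise =>
    intro i j hij hj
    have hti := grid_mem_Icc hT (hij.trans hj)
    have htj := grid_mem_Icc hT hj
    have hji : 0 ≤ ((j : ℝ) - i) * (T / N) :=
      mul_nonneg (sub_nonneg.2 (by exact_mod_cast hij)) (by positivity)
    have hdist : |t j - t i| = ((j : ℝ) - i) * (T / N) := by
      rw [← abs_of_nonneg hji]; congr 1; simp only [ht]; ring
    have hZ := hZH _ hti _ htj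
    have hphi := hphiH _ hti _ htj
    rw [hdist] at hZ hphi
    have hyoung' := mul_rpow_le_mul_add_of_le hlam0 hlam1 (by positivity) (by positivity)
      hji hyoung
    linarith [abs_le.1 hZ, abs_le.1 hphi]

theorem exists_pos_rpow_le_and_le_mul_rpow {κ m K e : ℝ} (hκ : 0 < κ) (hm : 0 < m) (hK : 0 < K)
    (he : 0 < e) : ∃ ε, 0 < ε ∧ ε ^ e ≤ κ ∧ ε ≤ m * K ^ (1 / e) := by
  refine ⟨min (κ ^ (1 / e)) (m * K ^ (1 / e)), by positivity, ?_, min_le_right _ _⟩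
  calc min (κ ^ (1 / e)) (m * K ^ (1 / e)) ^ e ≤ (κ ^ (1 / e)) ^ e :=
        Real.rpow_le_rpow (by positivity) (min_le_left _ _) he.le
    _ = κ := by rw [one_div, Real.rpow_inv_rpow hκ.le he.ne']

theorem implicitEuler_margin {T lam K Lam c2 ystar gam E : ℝ} {N : ℕ}
    {phi psi Z : ℝ → ℝ} {b : ℝ → ℝ → ℝ} {Yh : ℕ → ℝ}
    (hT : 0 ≤ T) (hlam0 : 0 ≤ lam) (hlam1 : lam ≤ 1) (hc2 : 0 ≤ c2) (hgam : 0 ≤ gam)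
    (hE : 0 < E) (hEy : E ≤ ystar) (hE0 : E ≤ Yh 0 - phi 0) (hE0' : E ≤ psi 0 - Yh 0)
    (hyoung : K + Lam ≤ (c2 / E ^ gam) ^ lam * (E / 2) ^ (1 - lam))
    (hphiH : ∀ s ∈ Set.Icc (0:ℝ) T, ∀ t ∈ Set.Icc (0:ℝ) T,
      |phi t - phi s| ≤ K * |t - s| ^ lam)
    (hpsiH : ∀ s ∈ Set.Icc (0:ℝ) T, ∀ t ∈ Set.Icc (0:ℝ) T,
      |psi t - psi s| ≤ K * |t - s| ^ lam)
    (hZH : ∀ s ∈ Set.Icc (0:ℝ) T, ∀ t ∈ Set.Icc (0:ℝ) T, |Z t - Z s| ≤ Lam * |t - s| ^ lam)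
    (hB3low : ∀ t ∈ Set.Icc (0:ℝ) T, ∀ y : ℝ, phi t < y → y ≤ phi t + ystar → y < psi t →
      c2 / (y - phi t) ^ gam ≤ b t y)
    (hB3up : ∀ t ∈ Set.Icc (0:ℝ) T, ∀ y : ℝ, psi t - ystar ≤ y → y < psi t → phi t < y →
      b t y ≤ -(c2 / (psi t - y) ^ gam))
    (hsch : ∀ k : ℕ, k < N →
      phi (((k : ℝ) + 1) * T / (N : ℝ)) < Yh (k + 1) ∧
      Yh (k + 1) < psi (((k : ℝ) + 1) * T / (N : ℝ)) ∧
      Yh (k + 1) = Yh k + b (((k : ℝ) + 1) * T / (N : ℝ)) (Yh (k + 1)) * (T / (N : ℝ))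
        + (Z (((k : ℝ) + 1) * T / (N : ℝ)) - Z ((k : ℝ) * T / (N : ℝ)))) :
    ∀ n ≤ N, phi ((n : ℝ) * T / (N : ℝ)) + E / 2 ≤ Yh n ∧
      Yh n ≤ psi ((n : ℝ) * T / (N : ℝ)) - E / 2 := by
  have hgrid : ∀ k < N, ((k : ℝ) + 1) * T / N ∈ Set.Icc 0 T := fun k hk => by
    exact_mod_cast grid_mem_Icc (N := N) (k := k + 1) hT hk
  have hlow := implicitEuler_lower_margin (Yh := Yh) hT hlam0 hlam1 hc2 hgam hE hEy hE0 hyoung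
    hphiH hZH (fun k hk => ⟨(hsch k hk).1, (hsch k hk).2.2⟩)
    (fun k hk hy => hB3low _ (hgrid k hk) _ (hsch k hk).1 hy (hsch k hk).2.1)
  have hup := implicitEuler_lower_margin (phi := fun t => -psi t) (Z := fun t => -Z t)
    (b := fun t y => -b t (-y)) (Yh := fun k => -Yh k) hT hlam0 hlam1 hc2 hgam hE hEy
    (by linarith) hyoung
    (fun s hs t ht => by rw [neg_sub_neg, abs_sub_comm]; exact hpsiH s hs t ht)
    (fun s hs t ht => by rw [neg_sub_neg, abs_sub_comm]; exact hZH s hs t ht)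
    (fun k hk => ⟨by linarith [(hsch k hk).2.1],
      by simp only [neg_neg]; linarith [(hsch k hk).2.2]⟩)
    (fun k hk hy => by
      rw [neg_neg, neg_sub_neg, le_neg]
      exact hB3up _ (hgrid k hk) _ (by linarith) (hsch k hk).2.1 (hsch k hk).1)
  exact fun n hn => ⟨hlow n hn, by linarith [hup n hn]⟩

theorem stmt_6_general
    (T lam : ℝ) (hT : 0 < T) (hlam : lam ∈ Set.Ioo (0:ℝ) 1)
    (phi psi : ℝ → ℝ) (K : ℝ) (hK : 0 < K)
    (hphiH : ∀ s ∈ Set.Icc (0:ℝ) T, ∀ t ∈ Set.Icc (0:ℝ) T, |phi t - phi s| ≤ K * |t - s| ^ lam)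
    (hpsiH : ∀ s ∈ Set.Icc (0:ℝ) T, ∀ t ∈ Set.Icc (0:ℝ) T, |psi t - psi s| ≤ K * |t - s| ^ lam)
    (b : ℝ → ℝ → ℝ) (c2 ystar gam : ℝ)
    (hc2 : 0 < c2) (hystar : 0 < ystar)
    (hgam : 1 / lam - 1 < gam)
    (hB3low : ∀ t ∈ Set.Icc (0:ℝ) T, ∀ y : ℝ, phi t < y → y ≤ phi t + ystar → y < psi t →
      c2 / (y - phi t) ^ gam ≤ b t y)
    (hB3up : ∀ t ∈ Set.Icc (0:ℝ) T, ∀ y : ℝ, psi t - ystar ≤ y → y < psi t → phi t < y →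
      b t y ≤ -(c2 / (psi t - y) ^ gam))
    (Y0 : ℝ) (hB1 : phi 0 < Y0 ∧ Y0 < psi 0)
    (c3 : ℝ)
    :
    ∃ L1 L2 : ℝ, 0 < L1 ∧ 0 < L2 ∧
      ∀ (Z : ℝ → ℝ) (Lam : ℝ), 0 < Lam → Z 0 = 0 →
        (∀ s ∈ Set.Icc (0:ℝ) T, ∀ t ∈ Set.Icc (0:ℝ) T, |Z t - Z s| ≤ Lam * |t - s| ^ lam) →
        ∀ N : ℕ, 0 < N → c3 * (T / (N : ℝ)) < 1 →
        ∀ Yh : ℕ → ℝ, Yh 0 = Y0 →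
          (∀ k : ℕ, k < N →
            phi (((k : ℝ) + 1) * T / (N : ℝ)) < Yh (k + 1) ∧
            Yh (k + 1) < psi (((k : ℝ) + 1) * T / (N : ℝ)) ∧
            Yh (k + 1) = Yh k + b (((k : ℝ) + 1) * T / (N : ℝ)) (Yh (k + 1)) * (T / (N : ℝ))
              + (Z (((k : ℝ) + 1) * T / (N : ℝ)) - Z ((k : ℝ) * T / (N : ℝ)))) →
          ∀ n : ℕ, n ≤ N →
            phi ((n : ℝ) * T / (N : ℝ)) + L1 / (L2 + Lam) ^ (1 / (gam * lam + lam - 1)) ≤ Yh n ∧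
            Yh n ≤ psi ((n : ℝ) * T / (N : ℝ)) - L1 / (L2 + Lam) ^ (1 / (gam * lam + lam - 1)) := by
  obtain ⟨hlam0, hlam1⟩ := hlam
  have he : 0 < gam * lam + lam - 1 := by
    have := mul_lt_mul_of_pos_right hgam hlam0
    rw [sub_mul, one_div_mul_cancel hlam0.ne'] at this
    linarith
  set e := gam * lam + lam - 1
  set m := min (min (Y0 - phi 0) (psi 0 - Y0)) ystar
  have hm : 0 < m := lt_min (lt_min (by linarith [hB1.1]) (by linarith [hB1.2])) hystar
  obtain ⟨ε, hε, hεκ, hεm⟩ := exists_pos_rpow_le_and_le_mul_rpow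
    (by positivity : 0 < c2 ^ lam / 2 ^ (1 - lam)) hm hK he
  refine ⟨ε / 2, K, by positivity, hK, ?_⟩
  intro Z Lam hLam _ hZH N _ _ Yh hY0 hsch n hn
  set E := ε / (K + Lam) ^ (1 / e)
  have hEm : E ≤ m := by
    rw [div_le_iff₀ (by positivity)]
    calc ε ≤ m * K ^ (1 / e) := hεm
      _ ≤ m * (K + Lam) ^ (1 / e) := by gcongr; linarith
  rw [div_right_comm]
  subst hY0
  exact implicitEuler_margin hT.le hlam0.le hlam1.le hc2.le (by nlinarith) (by positivity)
    (hEm.trans (min_le_right _ _)) (hEm.trans ((min_le_left _ _).trans (min_le_left _ _)))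
    (hEm.trans ((min_le_left _ _).trans (min_le_right _ _)))
    (le_rpow_mul_rpow_of_rpow_le hc2.le (by positivity) hε he hεκ)
    hphiH hpsiH hZH hB3low hB3up hsch n hn

theorem stmt_6
    (T lam : ℝ) (hT : 0 < T) (hlam : lam ∈ Set.Ioo (0:ℝ) 1)
    (phi psi : ℝ → ℝ) (K : ℝ) (hK : 0 < K)
    (hphiH : ∀ s ∈ Set.Icc (0:ℝ) T, ∀ t ∈ Set.Icc (0:ℝ) T, |phi t - phi s| ≤ K * |t - s| ^ lam)
    (hpsiH : ∀ s ∈ Set.Icc (0:ℝ) T, ∀ t ∈ Set.Icc (0:ℝ) T, |psi t - psi s| ≤ K * |t - s| ^ lam)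
    (hphipsi : ∀ t ∈ Set.Icc (0:ℝ) T, phi t < psi t)
    (b : ℝ → ℝ → ℝ) (c1 p c2 ystar gam : ℝ)
    (hc1 : 0 < c1) (hp : 1 < p) (hc2 : 0 < c2) (hystar : 0 < ystar)
    (hgam : 1 / lam - 1 < gam)
    (hB2cont : ContinuousOn (fun q : ℝ × ℝ => b q.1 q.2)
      {q : ℝ × ℝ | q.1 ∈ Set.Icc (0:ℝ) T ∧ phi q.1 < q.2 ∧ q.2 < psi q.1})
    (hB2lip : ∀ ε : ℝ, 0 < ε → ε < min 1 ((⨆ t : Set.Icc (0:ℝ) T, |psi t.1 - phi t.1|) / 2) →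
      ∀ t1 ∈ Set.Icc (0:ℝ) T, ∀ t2 ∈ Set.Icc (0:ℝ) T, ∀ y1 y2 : ℝ,
        phi t1 + ε < y1 → y1 < psi t1 - ε → phi t2 + ε < y2 → y2 < psi t2 - ε →
        |b t1 y1 - b t2 y2| ≤ c1 / ε ^ p * (|y1 - y2| + |t1 - t2| ^ lam))
    (hB3low : ∀ t ∈ Set.Icc (0:ℝ) T, ∀ y : ℝ, phi t < y → y ≤ phi t + ystar → y < psi t →
      c2 / (y - phi t) ^ gam ≤ b t y)
    (hB3up : ∀ t ∈ Set.Icc (0:ℝ) T, ∀ y : ℝ, psi t - ystar ≤ y → y < psi t → phi t < y →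
      b t y ≤ -(c2 / (psi t - y) ^ gam))
    (Y0 : ℝ) (hB1 : phi 0 < Y0 ∧ Y0 < psi 0)
    (bp : ℝ → ℝ → ℝ) (c3 : ℝ) (hc3 : 0 < c3)
    (hB4deriv : ∀ t ∈ Set.Icc (0:ℝ) T, ∀ y : ℝ, phi t < y → y < psi t →
      HasDerivAt (fun x => b t x) (bp t y) y)
    (hB4cont : ContinuousOn (fun q : ℝ × ℝ => bp q.1 q.2)
      {q : ℝ × ℝ | q.1 ∈ Set.Icc (0:ℝ) T ∧ phi q.1 < q.2 ∧ q.2 < psi q.1})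
    (hB4lt : ∀ t ∈ Set.Icc (0:ℝ) T, ∀ y : ℝ, phi t < y → y < psi t → bp t y < c3)
    :
    ∃ L1 L2 : ℝ, 0 < L1 ∧ 0 < L2 ∧
      ∀ (Z : ℝ → ℝ) (Lam : ℝ), 0 < Lam → Z 0 = 0 →
        (∀ s ∈ Set.Icc (0:ℝ) T, ∀ t ∈ Set.Icc (0:ℝ) T, |Z t - Z s| ≤ Lam * |t - s| ^ lam) →
        ∀ N : ℕ, 0 < N → c3 * (T / (N : ℝ)) < 1 →
        ∀ Yh : ℕ → ℝ, Yh 0 = Y0 →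
          (∀ k : ℕ, k < N →
            phi (((k : ℝ) + 1) * T / (N : ℝ)) < Yh (k + 1) ∧
            Yh (k + 1) < psi (((k : ℝ) + 1) * T / (N : ℝ)) ∧
            Yh (k + 1) = Yh k + b (((k : ℝ) + 1) * T / (N : ℝ)) (Yh (k + 1)) * (T / (N : ℝ))
              + (Z (((k : ℝ) + 1) * T / (N : ℝ)) - Z ((k : ℝ) * T / (N : ℝ)))) →
          ∀ n : ℕ, n ≤ N →
            phi ((n : ℝ) * T / (N : ℝ)) + L1 / (L2 + Lam) ^ (1 / (gam * lam + lam - 1)) ≤ Yh n ∧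
            Yh n ≤ psi ((n : ℝ) * T / (N : ℝ)) - L1 / (L2 + Lam) ^ (1 / (gam * lam + lam - 1)) :=
  stmt_6_general T lam hT hlam phi psi K hK hphiH hpsiH b c2 ystar gam hc2 hystar hgam hB3low hB3up
    Y0 hB1 c3
end

section
/- Under Assumptions (B1)–(B3), there exists a constant C > 0, depending only on Y(0), φ, ψ, the drift b (through c1, c2, p, y_*, γ), λ and T (in particular not on Z or Λ), such that for every noise path Z with Hölder constant Λ, the pathwise solution Y satisfies |Y(t) − Y(s)| ≤ C·(1 + Λ^{max{p, γλ+λ−1}/(γλ+λ−1)})·|t − s|^λ for all s, t ∈ [0,T]. -/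
open MeasureTheory Set Filter Topology

/-!
Put `α = γλ + λ - 1 > 0` and work at the level `ε ≍ (1 + Λ) ^ (-1/α)`, with the time scale
`δ = ε (2ε)^γ / c₂`. As long as `Y - φ ≤ 2ε` the drift is at least `c₂ (2ε)^(-γ) = ε / δ`, while the
noise and the boundary move by at most `(K + Λ) h^λ ≤ ε (1 + h/δ)` in time `h`; the choice of `ε` is
exactly what makes `(K + Λ) δ^λ ≤ ε`. Hence `Y - φ` never falls from `2ε` below `ε`, and the same
holds for `ψ - Y`. On the `ε/2`-interior the drift is Lipschitz with constant
`c₁ (ε/2)^(-p) ≍ (1 + Λ)^(p/α)`, so it is bounded along `Y`, and the Hölder bound follows from the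
integral equation.
-/

def IsHolderOnIcc (T lam K : ℝ) (f : ℝ → ℝ) : Prop :=
  ∀ s ∈ Icc (0:ℝ) T, ∀ t ∈ Icc (0:ℝ) T, |f t - f s| ≤ K * |t - s| ^ lam

namespace IsHolderOnIcc

variable {T lam K : ℝ} {f : ℝ → ℝ}

lemma neg (hf : IsHolderOnIcc T lam K f) : IsHolderOnIcc T lam K (-f) := fun s hs t ht => by
  simpa only [Pi.neg_apply, neg_sub_neg, abs_sub_comm] using hf s hs t ht

lemma continuousOn (hf : IsHolderOnIcc T lam K f) (hlam : 0 < lam) :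
    ContinuousOn f (Icc 0 T) := by
  intro s hs
  have hlim : Tendsto (fun t => K * |t - s| ^ lam) (𝓝[Icc 0 T] s) (𝓝 0) := by
    have hc : Continuous (fun t => K * |t - s| ^ lam) := by fun_prop (disch := positivity)
    simpa [hlam.ne'] using (hc.tendsto s).mono_left nhdsWithin_le_nhds
  rw [ContinuousWithinAt, tendsto_iff_dist_tendsto_zero]
  refine squeeze_zero' (Eventually.of_forall fun _ => dist_nonneg) ?_ hlim
  filter_upwards [self_mem_nhdsWithin] with t ht
  exact (Real.dist_eq _ _).trans_le (hf s hs t ht)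

end IsHolderOnIcc

lemma rpow_le_rpow_mul_one_add_div {lam δ h : ℝ} (hlam0 : 0 ≤ lam) (hlam1 : lam ≤ 1) (hδ : 0 < δ)
    (hh : 0 ≤ h) : h ^ lam ≤ δ ^ lam * (1 + h / δ) := by
  have hhδ : 0 ≤ h / δ := div_nonneg hh hδ.le
  rcases le_total h δ with hle | hge
  · calc h ^ lam ≤ δ ^ lam := Real.rpow_le_rpow hh hle hlam0
      _ ≤ δ ^ lam * (1 + h / δ) := le_mul_of_one_le_right (by positivity) (by linarith)
  · have h1 : 1 ≤ h / δ := (one_le_div hδ).2 hge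
    calc h ^ lam = δ ^ lam * (h / δ) ^ lam := by
          rw [Real.div_rpow hh hδ.le, mul_div_cancel₀ _ (by positivity)]
      _ ≤ δ ^ lam * (h / δ) ^ (1 : ℝ) := by gcongr
      _ ≤ δ ^ lam * (1 + h / δ) := by rw [Real.rpow_one]; gcongr; linarith

lemma one_add_rpow_le {x Q : ℝ} (hx : 0 ≤ x) (hQ : 1 ≤ Q) :
    (1 + x) ^ Q ≤ 2 ^ (Q - 1) * (1 + x ^ Q) := by
  have h := NNReal.coe_le_coe.2 (NNReal.rpow_add_le_mul_rpow_add_rpow 1 x.toNNReal hQ)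
  push_cast at h
  simpa [Real.coe_toNNReal _ hx] using h

lemma le_rpow_one_sub_mul_rpow {lam T x : ℝ} (hlam1 : lam ≤ 1) (hx : 0 ≤ x) (hxT : x ≤ T) :
    x ≤ T ^ (1 - lam) * x ^ lam := by
  rcases hx.eq_or_lt with rfl | hx
  · exact mul_nonneg (Real.rpow_nonneg hxT _) (Real.rpow_nonneg le_rfl _)
  calc x = x ^ (1 - lam) * x ^ lam := by rw [← Real.rpow_add hx, sub_add_cancel, Real.rpow_one]
    _ ≤ T ^ (1 - lam) * x ^ lam := by gcongr

lemma le_on_Icc_of_forall_drop_le {T r R : ℝ} {g : ℝ → ℝ} (hg : ContinuousOn g (Icc 0 T))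
    (hrR : r ≤ R) (hg0 : R ≤ g 0)
    (hdrop : ∀ u ∈ Icc 0 T, ∀ v ∈ Icc 0 T, u < v → (∀ w ∈ Icc u v, g w ≤ R) → g u - g v ≤ R - r) :
    ∀ t ∈ Icc 0 T, r ≤ g t := by
  intro t ht
  by_contra! hgt
  -- `σ` is the last time before `t` at which `g ≥ R`; on `[σ, t]` the drop bound applies.
  set S := Icc 0 t ∩ g ⁻¹' Ici R
  set σ := sSup S
  have ht0 : Icc 0 t ⊆ Icc 0 T := Icc_subset_Icc_right ht.2
  have hS : IsCompact S := isCompact_Icc.of_isClosed_subset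
    ((hg.mono ht0).preimage_isClosed_of_isClosed isClosed_Icc isClosed_Ici) inter_subset_left
  obtain ⟨⟨hσ0, hσt⟩, hgσ : R ≤ g σ⟩ : σ ∈ S := hS.sSup_mem ⟨0, ⟨le_rfl, ht.1⟩, hg0⟩
  have hσT : σ ∈ Icc 0 T := ⟨hσ0, hσt.trans ht.2⟩
  replace hσt : σ < t := hσt.lt_of_ne fun h => by rw [h] at hgσ; linarith
  have hlt : ∀ w ∈ Ioc σ t, g w < R := fun w hw => by
    by_contra! hw'
    exact hw.1.not_ge (le_csSup hS.bddAbove ⟨⟨hσ0.trans hw.1.le, hw.2⟩, hw'⟩)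
  have hσR : g σ ≤ R :=
    ContinuousWithinAt.closure_le (by rw [closure_Ioc hσt.ne]; exact ⟨le_rfl, hσt.le⟩)
      ((hg σ hσT).mono fun w hw => ⟨hσ0.trans hw.1.le, hw.2.trans ht.2⟩)
      continuousWithinAt_const fun w hw => (hlt w hw).le
  have hle : ∀ w ∈ Icc σ t, g w ≤ R := fun w hw =>
    hw.1.eq_or_lt.elim (fun h => h ▸ hσR) fun h => (hlt w ⟨h, hw.2⟩).le
  linarith [hdrop σ hσT t ht hσt hle]

lemma le_on_Icc_of_increment_ge_integral {T lam M ε δ : ℝ} {f g : ℝ → ℝ} (hlam0 : 0 ≤ lam)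
    (hlam1 : lam ≤ 1) (hM : 0 ≤ M) (hδ : 0 < δ) (hMδ : M * δ ^ lam ≤ ε)
    (hf : IntegrableOn f (Icc 0 T)) (hg : ContinuousOn g (Icc 0 T)) (hg0 : 2 * ε ≤ g 0)
    (hinc : ∀ u ∈ Icc 0 T, ∀ v ∈ Icc 0 T, u ≤ v →
      (∫ w in u..v, f w) - M * (v - u) ^ lam ≤ g v - g u)
    (hfg : ∀ w ∈ Icc 0 T, g w ≤ 2 * ε → ε / δ ≤ f w) :
    ∀ t ∈ Icc 0 T, ε ≤ g t := by
  have hε : 0 ≤ ε := (mul_nonneg hM (Real.rpow_nonneg hδ.le _)).trans hMδ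
  refine le_on_Icc_of_forall_drop_le hg (by linarith) hg0 fun u hu v hv huv hsmall => ?_
  have hint : ε / δ * (v - u) ≤ ∫ w in u..v, f w := by
    have hfuv : IntervalIntegrable f volume u v := (hf.mono_set (by
      rw [uIcc_of_le huv.le]; exact Icc_subset_Icc hu.1 hv.2)).intervalIntegrable
    have := intervalIntegral.integral_mono_on huv.le intervalIntegrable_const hfuv
      fun w hw => hfg w ⟨hu.1.trans hw.1, hw.2.trans hv.2⟩ (hsmall w hw)
    rwa [intervalIntegral.integral_const, smul_eq_mul, mul_comm] at this
  have hosc : M * (v - u) ^ lam ≤ ε + ε / δ * (v - u) := calc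
    M * (v - u) ^ lam ≤ M * (δ ^ lam * (1 + (v - u) / δ)) :=
      mul_le_mul_of_nonneg_left (rpow_le_rpow_mul_one_add_div hlam0 hlam1 hδ (by linarith)) hM
    _ ≤ ε * (1 + (v - u) / δ) := by
      rw [← mul_assoc]
      exact mul_le_mul_of_nonneg_right hMδ (by have := div_pos (sub_pos.2 huv) hδ; linarith)
    _ = ε + ε / δ * (v - u) := by ring
  linarith [hinc u hu v hv huv.le]

lemma sub_eq_integral_add_sub {T Y0 : ℝ} {F Y Z : ℝ → ℝ} (hF : IntegrableOn F (Icc 0 T))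
    (hY : ∀ t ∈ Icc 0 T, Y t = Y0 + (∫ s in (0:ℝ)..t, F s) + Z t) :
    ∀ u ∈ Icc 0 T, ∀ v ∈ Icc 0 T, Y v - Y u = (∫ w in u..v, F w) + (Z v - Z u) := by
  have hI : ∀ t ∈ Icc 0 T, IntervalIntegrable F volume 0 t := fun t ht =>
    (hF.mono_set (by rw [uIcc_of_le ht.1]; exact Icc_subset_Icc_right ht.2)).intervalIntegrable
  intro u hu v hv
  rw [hY u hu, hY v hv, ← intervalIntegral.integral_interval_sub_left (hI v hv) (hI u hu)]
  ring

lemma le_sub_of_repelling_drift {T lam K Λ c2 γ ystar ε : ℝ} {φ F Y Z : ℝ → ℝ}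
    (hlam0 : 0 < lam) (hlam1 : lam ≤ 1) (hK : 0 ≤ K) (hΛ : 0 ≤ Λ) (hc2 : 0 < c2) (hγ : 0 ≤ γ)
    (hε : 0 < ε) (hεy : 2 * ε ≤ ystar) (hadm : (K + Λ) * (ε * (2 * ε) ^ γ / c2) ^ lam ≤ ε)
    (hφ : IsHolderOnIcc T lam K φ) (hZ : IsHolderOnIcc T lam Λ Z)
    (hF : IntegrableOn F (Icc 0 T)) (hYc : ContinuousOn Y (Icc 0 T)) (hY0 : 2 * ε ≤ Y 0 - φ 0)
    (hinc : ∀ u ∈ Icc 0 T, ∀ v ∈ Icc 0 T, Y v - Y u = (∫ w in u..v, F w) + (Z v - Z u))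
    (hrepel : ∀ t ∈ Icc 0 T, φ t < Y t → Y t ≤ φ t + ystar → c2 / (Y t - φ t) ^ γ ≤ F t)
    (hYφ : ∀ t ∈ Icc 0 T, φ t < Y t) :
    ∀ t ∈ Icc 0 T, ε ≤ Y t - φ t := by
  refine le_on_Icc_of_increment_ge_integral hlam0.le hlam1 (by positivity) (by positivity) hadm hF
    (hYc.sub (hφ.continuousOn hlam0)) hY0 (fun u hu v hv huv => ?_) fun t ht hsmall => ?_
  · have hZuv := abs_le.1 (hZ u hu v hv)
    have hφuv := abs_le.1 (hφ u hu v hv)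
    rw [abs_of_nonneg (sub_nonneg.2 huv)] at hZuv hφuv
    linarith [hinc u hu v hv, add_mul K Λ ((v - u) ^ lam)]
  · have hYφt := hYφ t ht
    calc ε / (ε * (2 * ε) ^ γ / c2) = c2 / (2 * ε) ^ γ := by field_simp
      _ ≤ c2 / (Y t - φ t) ^ γ := by gcongr
      _ ≤ F t := hrepel t ht hYφt (by linarith)

lemma mem_Icc_of_admissible {T lam K Λ c2 γ ystar ε : ℝ} {φ ψ Y Z : ℝ → ℝ} {b : ℝ → ℝ → ℝ}
    (hlam0 : 0 < lam) (hlam1 : lam ≤ 1) (hK : 0 ≤ K) (hΛ : 0 ≤ Λ) (hc2 : 0 < c2) (hγ : 0 ≤ γ)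
    (hε : 0 < ε) (hεy : 2 * ε ≤ ystar) (hadm : (K + Λ) * (ε * (2 * ε) ^ γ / c2) ^ lam ≤ ε)
    (hφ : IsHolderOnIcc T lam K φ) (hψ : IsHolderOnIcc T lam K ψ) (hZ : IsHolderOnIcc T lam Λ Z)
    (hlow : ∀ t ∈ Icc 0 T, ∀ y, φ t < y → y ≤ φ t + ystar → y < ψ t → c2 / (y - φ t) ^ γ ≤ b t y)
    (hup : ∀ t ∈ Icc 0 T, ∀ y, ψ t - ystar ≤ y → y < ψ t → φ t < y → b t y ≤ -(c2 / (ψ t - y) ^ γ))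
    (hF : IntegrableOn (fun t => b t (Y t)) (Icc 0 T)) (hYc : ContinuousOn Y (Icc 0 T))
    (hY : ∀ t ∈ Icc 0 T, φ t < Y t ∧ Y t < ψ t) (hY0 : Y 0 ∈ Icc (φ 0 + 2 * ε) (ψ 0 - 2 * ε))
    (hinc : ∀ u ∈ Icc 0 T, ∀ v ∈ Icc 0 T, Y v - Y u = (∫ w in u..v, b w (Y w)) + (Z v - Z u)) :
    ∀ t ∈ Icc 0 T, Y t ∈ Icc (φ t + ε) (ψ t - ε) := by
  have hφY := le_sub_of_repelling_drift hlam0 hlam1 hK hΛ hc2 hγ hε hεy hadm hφ hZ hF hYc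
    (by linarith [hY0.1]) hinc (fun t ht h₁ h₂ => hlow t ht _ h₁ h₂ (hY t ht).2)
    fun t ht => (hY t ht).1
  -- the upper boundary is the lower one after the reflection `y ↦ -y`
  have hYψ := le_sub_of_repelling_drift (ystar := ystar) hlam0 hlam1 hK hΛ hc2 hγ hε hεy hadm
    hψ.neg hZ.neg hF.neg hYc.neg (by simp only [Pi.neg_apply]; linarith [hY0.2])
    (fun u hu v hv => by
      simp only [Pi.neg_apply, intervalIntegral.integral_neg]; linarith [hinc u hu v hv])
    (fun t ht h₁ h₂ => by
      simp only [Pi.neg_apply, neg_sub_neg] at h₁ h₂ ⊢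
      linarith [hup t ht (Y t) (by linarith) (by linarith) (hY t ht).1])
    fun t ht => neg_lt_neg (hY t ht).2
  intro t ht
  have := hYψ t ht
  simp only [Pi.neg_apply, neg_sub_neg] at this
  exact ⟨by linarith [hφY t ht], by linarith⟩

lemma mul_add_sub_one_pos {lam γ : ℝ} (hlam : 0 < lam) (hγ : 1 / lam - 1 < γ) :
    0 < γ * lam + lam - 1 := by
  have := mul_lt_mul_of_pos_right hγ hlam
  rw [sub_mul, one_div_mul_cancel hlam.ne'] at this
  linarith

lemma rpow_mul_rpow_div_eq {ε c γ lam : ℝ} (hε : 0 < ε) (hc : 0 < c) :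
    (ε * (2 * ε) ^ γ / c) ^ lam = (2 ^ γ / c) ^ lam * ε ^ (γ * lam + lam - 1) * ε := by
  have h : ε * (2 * ε) ^ γ / c = 2 ^ γ / c * ε ^ (γ + 1) := by
    rw [Real.mul_rpow zero_le_two hε.le, Real.rpow_add_one hε.ne']
    ring
  rw [h, Real.mul_rpow (by positivity) (by positivity), ← Real.rpow_mul hε.le,
    show (γ + 1) * lam = γ * lam + lam - 1 + 1 by ring, Real.rpow_add_one hε.ne']
  ring

lemma exists_pos_le_mul_rpow_le_one {e c α : ℝ} (he : 0 < e) (hc : 0 < c) (hα : 0 < α) :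
    ∃ ε₀, 0 < ε₀ ∧ ε₀ ≤ e ∧ c * ε₀ ^ α ≤ 1 := by
  refine ⟨min e (c ^ (-1 / α)), by positivity, min_le_left _ _, ?_⟩
  calc c * min e (c ^ (-1 / α)) ^ α ≤ c * (c ^ (-1 / α)) ^ α := by gcongr; exact min_le_right _ _
    _ = 1 := by
      rw [← Real.rpow_mul hc.le, div_mul_cancel₀ _ hα.ne', Real.rpow_neg_one,
        mul_inv_cancel₀ hc.ne']

lemma exists_admissible_level {lam γ c2 K p e : ℝ} (hc2 : 0 < c2) (hK : 0 ≤ K)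
    (he : 0 < e) (hα : 0 < γ * lam + lam - 1) :
    ∃ A, 0 < A ∧ ∀ Λ, 0 ≤ Λ → ∃ ε, 0 < ε ∧ ε ≤ e ∧ (K + Λ) * (ε * (2 * ε) ^ γ / c2) ^ lam ≤ ε ∧
      1 / (ε / 2) ^ p ≤ A * (1 + Λ) ^ (p / (γ * lam + lam - 1)) := by
  set α := γ * lam + lam - 1
  set κ := (2 ^ γ / c2) ^ lam
  obtain ⟨ε₀, hε₀, hε₀e, hκε₀⟩ :=
    exists_pos_le_mul_rpow_le_one he (by positivity : 0 < κ * (K + 1)) hα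
  refine ⟨1 / (ε₀ / 2) ^ p, by positivity, fun Λ hΛ => ?_⟩
  set ρ := (1 + Λ) ^ (1 / α)
  have hρ : 1 ≤ ρ := Real.one_le_rpow (by linarith) (by positivity)
  have hρα : ρ ^ α = 1 + Λ := by
    rw [← Real.rpow_mul (by linarith), one_div_mul_cancel hα.ne', Real.rpow_one]
  have hε : 0 < ε₀ / ρ := by positivity
  refine ⟨ε₀ / ρ, hε, (div_le_self hε₀.le hρ).trans hε₀e, ?_, le_of_eq ?_⟩
  · rw [rpow_mul_rpow_div_eq hε hc2, Real.div_rpow hε₀.le (by positivity), hρα]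
    have hKΛ : K + Λ ≤ (K + 1) * (1 + Λ) := by nlinarith
    calc (K + Λ) * (κ * (ε₀ ^ α / (1 + Λ)) * (ε₀ / ρ))
        = (K + Λ) / (1 + Λ) * (κ * ε₀ ^ α) * (ε₀ / ρ) := by ring
      _ ≤ (K + 1) * (κ * ε₀ ^ α) * (ε₀ / ρ) := by
        gcongr
        exact (div_le_iff₀ (by linarith)).2 hKΛ
      _ ≤ ε₀ / ρ := by nlinarith
  · rw [div_right_comm, Real.div_rpow (by positivity) (by positivity), one_div_div,
      ← Real.rpow_mul (by linarith), one_div_mul_eq_div]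
    ring

lemma sub_le_iSup_abs_sub {T : ℝ} {φ ψ : ℝ → ℝ} (hT : 0 ≤ T) (hφ : ContinuousOn φ (Icc 0 T))
    (hψ : ContinuousOn ψ (Icc 0 T)) : ψ 0 - φ 0 ≤ ⨆ t : Icc (0:ℝ) T, |ψ t - φ t| := by
  have hc : Continuous fun t : Icc (0:ℝ) T => |ψ t - φ t| :=
    ((hψ.sub hφ).domRestrict).abs
  exact (le_abs_self _).trans (le_ciSup (isCompact_range hc).bddAbove ⟨0, le_rfl, hT⟩)

lemma exists_abs_le_of_continuousOn {T : ℝ} {φ ψ : ℝ → ℝ} (hφ : ContinuousOn φ (Icc 0 T))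
    (hψ : ContinuousOn ψ (Icc 0 T)) : ∃ R, ∀ t ∈ Icc 0 T, |φ t| ≤ R ∧ |ψ t| ≤ R := by
  obtain ⟨R₁, h₁⟩ := isCompact_Icc.exists_bound_of_continuousOn hφ
  obtain ⟨R₂, h₂⟩ := isCompact_Icc.exists_bound_of_continuousOn hψ
  exact ⟨max R₁ R₂, fun t ht =>
    ⟨(h₁ t ht).trans (le_max_left _ _), (h₂ t ht).trans (le_max_right _ _)⟩⟩

lemma abs_le_add_of_lipschitz_along {T lam L R η : ℝ} {φ ψ Y : ℝ → ℝ} {b : ℝ → ℝ → ℝ}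
    (hT : 0 ≤ T) (hlam : 0 ≤ lam) (hL : 0 ≤ L)
    (hlip : ∀ t1 ∈ Icc (0:ℝ) T, ∀ t2 ∈ Icc (0:ℝ) T, ∀ y1 y2 : ℝ,
      φ t1 + η < y1 → y1 < ψ t1 - η → φ t2 + η < y2 → y2 < ψ t2 - η →
      |b t1 y1 - b t2 y2| ≤ L * (|y1 - y2| + |t1 - t2| ^ lam))
    (hR : ∀ t ∈ Icc 0 T, |φ t| ≤ R ∧ |ψ t| ≤ R) (hY : ∀ t ∈ Icc 0 T, φ t + η < Y t ∧ Y t < ψ t - η)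
    (hη : 0 ≤ η) :
    ∀ t ∈ Icc 0 T, |b t (Y t)| ≤ |b 0 (Y 0)| + L * (2 * R + T ^ lam) := by
  have h0 : (0:ℝ) ∈ Icc 0 T := ⟨le_rfl, hT⟩
  have hYR : ∀ t ∈ Icc 0 T, |Y t| ≤ R := fun t ht => by
    have hφ := abs_le.1 (hR t ht).1
    have hψ := abs_le.1 (hR t ht).2
    exact abs_le.2 ⟨by linarith [(hY t ht).1], by linarith [(hY t ht).2]⟩
  intro t ht
  have hdiff : |b t (Y t) - b 0 (Y 0)| ≤ L * (2 * R + T ^ lam) := by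
    refine (hlip t ht 0 h0 _ _ (hY t ht).1 (hY t ht).2 (hY 0 h0).1 (hY 0 h0).2).trans ?_
    gcongr
    · linarith [abs_sub (Y t) (Y 0), hYR t ht, hYR 0 h0]
    · rw [sub_zero, abs_of_nonneg ht.1]; exact ht.2
  linarith [abs_sub_abs_le_abs_sub (b t (Y t)) (b 0 (Y 0))]

lemma IsHolderOnIcc.of_increment {T lam B Λ : ℝ} {F Y Z : ℝ → ℝ} (hlam1 : lam ≤ 1) (hB : 0 ≤ B)
    (hF : ∀ t ∈ Icc 0 T, |F t| ≤ B) (hZ : IsHolderOnIcc T lam Λ Z)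
    (hinc : ∀ u ∈ Icc 0 T, ∀ v ∈ Icc 0 T, Y v - Y u = (∫ w in u..v, F w) + (Z v - Z u)) :
    IsHolderOnIcc T lam (B * T ^ (1 - lam) + Λ) Y := by
  intro s hs t ht
  have hint : |∫ w in s..t, F w| ≤ B * |t - s| :=
    intervalIntegral.norm_integral_le_of_norm_le_const (f := F) (C := B) fun w hw =>
      hF w (uIcc_subset_Icc hs ht (uIoc_subset_uIcc hw))
  have hts : |t - s| ≤ T ^ (1 - lam) * |t - s| ^ lam :=
    le_rpow_one_sub_mul_rpow hlam1 (abs_nonneg _) (abs_sub_le_of_nonneg_of_le ht.1 ht.2 hs.1 hs.2)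
  calc |Y t - Y s| ≤ |∫ w in s..t, F w| + |Z t - Z s| := by
        rw [hinc s hs t ht]; exact abs_add_le _ _
    _ ≤ B * (T ^ (1 - lam) * |t - s| ^ lam) + Λ * |t - s| ^ lam := by
      gcongr
      exacts [hint.trans (by gcongr), hZ s hs t ht]
    _ = (B * T ^ (1 - lam) + Λ) * |t - s| ^ lam := by ring

lemma add_mul_add_le_mul_one_add_rpow {B₀ M D L τ Λ q Q : ℝ} (hB₀ : 0 ≤ B₀) (hM : 0 ≤ M)
    (hD : 0 ≤ D) (hτ : 0 ≤ τ) (hΛ : 0 ≤ Λ) (hqQ : q ≤ Q) (hQ : 1 ≤ Q) (hL : L ≤ M * (1 + Λ) ^ q) :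
    (B₀ + L * D) * τ + Λ ≤ ((B₀ + M * D) * τ + 1) * 2 ^ (Q - 1) * (1 + Λ ^ Q) := by
  have hm : 1 + Λ ≤ (1 + Λ) ^ Q := Real.self_le_rpow_of_one_le (by linarith) hQ
  have hq : (1 + Λ) ^ q ≤ (1 + Λ) ^ Q := Real.rpow_le_rpow_of_exponent_le (by linarith) hqQ
  have hB₀τ : B₀ * τ ≤ B₀ * τ * (1 + Λ) ^ Q := le_mul_of_one_le_right (by positivity) (by linarith)
  have hLτ : L * D * τ ≤ M * D * τ * (1 + Λ) ^ Q := calc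
    L * D * τ ≤ M * (1 + Λ) ^ Q * D * τ := by gcongr; exact hL.trans (by gcongr)
    _ = M * D * τ * (1 + Λ) ^ Q := by ring
  calc (B₀ + L * D) * τ + Λ ≤ ((B₀ + M * D) * τ + 1) * (1 + Λ) ^ Q := by linarith
    _ ≤ ((B₀ + M * D) * τ + 1) * (2 ^ (Q - 1) * (1 + Λ ^ Q)) := by
      gcongr; exact one_add_rpow_le hΛ hQ
    _ = _ := by ring

theorem stmt_7_general
    (T lam : ℝ) (hT : 0 < T) (hlam : lam ∈ Set.Ioo (0:ℝ) 1)
    (phi psi : ℝ → ℝ) (K : ℝ) (hK : 0 < K)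
    (hphiH : ∀ s ∈ Set.Icc (0:ℝ) T, ∀ t ∈ Set.Icc (0:ℝ) T, |phi t - phi s| ≤ K * |t - s| ^ lam)
    (hpsiH : ∀ s ∈ Set.Icc (0:ℝ) T, ∀ t ∈ Set.Icc (0:ℝ) T, |psi t - psi s| ≤ K * |t - s| ^ lam)
    (b : ℝ → ℝ → ℝ) (c1 p c2 ystar gam : ℝ)
    (hc1 : 0 < c1) (hc2 : 0 < c2) (hystar : 0 < ystar)
    (hgam : 1 / lam - 1 < gam)
    (hB2cont : ContinuousOn (fun q : ℝ × ℝ => b q.1 q.2)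
      {q : ℝ × ℝ | q.1 ∈ Set.Icc (0:ℝ) T ∧ phi q.1 < q.2 ∧ q.2 < psi q.1})
    (hB2lip : ∀ ε : ℝ, 0 < ε → ε < min 1 ((⨆ t : Set.Icc (0:ℝ) T, |psi t.1 - phi t.1|) / 2) →
      ∀ t1 ∈ Set.Icc (0:ℝ) T, ∀ t2 ∈ Set.Icc (0:ℝ) T, ∀ y1 y2 : ℝ,
        phi t1 + ε < y1 → y1 < psi t1 - ε → phi t2 + ε < y2 → y2 < psi t2 - ε →
        |b t1 y1 - b t2 y2| ≤ c1 / ε ^ p * (|y1 - y2| + |t1 - t2| ^ lam))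
    (hB3low : ∀ t ∈ Set.Icc (0:ℝ) T, ∀ y : ℝ, phi t < y → y ≤ phi t + ystar → y < psi t →
      c2 / (y - phi t) ^ gam ≤ b t y)
    (hB3up : ∀ t ∈ Set.Icc (0:ℝ) T, ∀ y : ℝ, psi t - ystar ≤ y → y < psi t → phi t < y →
      b t y ≤ -(c2 / (psi t - y) ^ gam))
    (Y0 : ℝ) (hB1 : phi 0 < Y0 ∧ Y0 < psi 0)
    :
    ∃ C : ℝ, 0 < C ∧
      ∀ (Z : ℝ → ℝ) (Lam : ℝ), 0 < Lam → Z 0 = 0 →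
        (∀ s ∈ Set.Icc (0:ℝ) T, ∀ t ∈ Set.Icc (0:ℝ) T, |Z t - Z s| ≤ Lam * |t - s| ^ lam) →
        ∀ Y : ℝ → ℝ, ContinuousOn Y (Set.Icc (0:ℝ) T) →
          (∀ t ∈ Set.Icc (0:ℝ) T, phi t < Y t ∧ Y t < psi t) →
          (∀ t ∈ Set.Icc (0:ℝ) T, Y t = Y0 + (∫ s in (0:ℝ)..t, b s (Y s)) + Z t) →
          ∀ s ∈ Set.Icc (0:ℝ) T, ∀ t ∈ Set.Icc (0:ℝ) T,
            |Y t - Y s| ≤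
              C * (1 + Lam ^ (max p (gam * lam + lam - 1) / (gam * lam + lam - 1)))
                * |t - s| ^ lam := by
  obtain ⟨hlam0, hlam1⟩ := hlam
  set α := gam * lam + lam - 1
  have hα : 0 < α := mul_add_sub_one_pos hlam0 hgam
  have hgam0 : 0 ≤ gam := by nlinarith
  have h0 : (0:ℝ) ∈ Icc 0 T := ⟨le_rfl, hT.le⟩
  have hφc := IsHolderOnIcc.continuousOn hphiH hlam0
  have hψc := IsHolderOnIcc.continuousOn hpsiH hlam0
  obtain ⟨R, hR⟩ := exists_abs_le_of_continuousOn hφc hψc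
  have hR0 : 0 ≤ R := (abs_nonneg _).trans (hR 0 h0).1
  obtain ⟨A, hA, hlevel⟩ := exists_admissible_level (p := p) hc2 hK.le
    (e := min (min 1 (ystar / 2)) (min ((Y0 - phi 0) / 2) ((psi 0 - Y0) / 2)))
    (by simp only [lt_min_iff]; refine ⟨⟨?_, ?_⟩, ?_, ?_⟩ <;> linarith) hα
  refine ⟨((|b 0 Y0| + c1 * A * (2 * R + T ^ lam)) * T ^ (1 - lam) + 1) * 2 ^ (max p α / α - 1),
    by positivity, fun Z Λ hΛ hZ0 hZ Y hYc hYin hYeq s hs t ht => ?_⟩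
  obtain ⟨ε, hε, hεe, hadm, hεA⟩ := hlevel Λ hΛ.le
  simp only [le_min_iff] at hεe
  have hF : ContinuousOn (fun u => b u (Y u)) (Icc 0 T) :=
    hB2cont.comp (continuousOn_id.prodMk hYc) fun u hu => ⟨hu, hYin u hu⟩
  have hinc := sub_eq_integral_add_sub hF.integrableOn_Icc hYeq
  have hY0 : Y 0 = Y0 := by simpa [hZ0] using hYeq 0 h0
  have hYε := mem_Icc_of_admissible hlam0 hlam1.le hK.le hΛ.le hc2 hgam0 hε (by linarith) hadm
    hphiH hpsiH hZ hB3low hB3up hF.integrableOn_Icc hYc hYin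
    (by rw [hY0]; constructor <;> linarith) hinc
  have hη : ε / 2 < min 1 ((⨆ t : Icc (0:ℝ) T, |psi t.1 - phi t.1|) / 2) :=
    lt_min (by linarith) (by linarith [sub_le_iSup_abs_sub hT.le hφc hψc])
  have hb := abs_le_add_of_lipschitz_along (Y := Y) hT.le hlam0.le (by positivity)
    (hB2lip _ (by positivity) hη) hR
    (fun t ht => ⟨by linarith [(hYε t ht).1], by linarith [(hYε t ht).2]⟩) (by positivity)
  refine (IsHolderOnIcc.of_increment hlam1.le (by positivity) hb hZ hinc s hs t ht).trans ?_
  gcongr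
  rw [hY0]
  refine add_mul_add_le_mul_one_add_rpow (abs_nonneg _) (by positivity) (by positivity)
    (by positivity) hΛ.le (div_le_div_of_nonneg_right (le_max_left _ _) hα.le)
    ((one_le_div hα).2 (le_max_right _ _)) ?_
  rw [← mul_one_div, mul_assoc]
  gcongr

theorem stmt_7
    (T lam : ℝ) (hT : 0 < T) (hlam : lam ∈ Set.Ioo (0:ℝ) 1)
    (phi psi : ℝ → ℝ) (K : ℝ) (hK : 0 < K)
    (hphiH : ∀ s ∈ Set.Icc (0:ℝ) T, ∀ t ∈ Set.Icc (0:ℝ) T, |phi t - phi s| ≤ K * |t - s| ^ lam)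
    (hpsiH : ∀ s ∈ Set.Icc (0:ℝ) T, ∀ t ∈ Set.Icc (0:ℝ) T, |psi t - psi s| ≤ K * |t - s| ^ lam)
    (hphipsi : ∀ t ∈ Set.Icc (0:ℝ) T, phi t < psi t)
    (b : ℝ → ℝ → ℝ) (c1 p c2 ystar gam : ℝ)
    (hc1 : 0 < c1) (hp : 1 < p) (hc2 : 0 < c2) (hystar : 0 < ystar)
    (hgam : 1 / lam - 1 < gam)
    (hB2cont : ContinuousOn (fun q : ℝ × ℝ => b q.1 q.2)
      {q : ℝ × ℝ | q.1 ∈ Set.Icc (0:ℝ) T ∧ phi q.1 < q.2 ∧ q.2 < psi q.1})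
    (hB2lip : ∀ ε : ℝ, 0 < ε → ε < min 1 ((⨆ t : Set.Icc (0:ℝ) T, |psi t.1 - phi t.1|) / 2) →
      ∀ t1 ∈ Set.Icc (0:ℝ) T, ∀ t2 ∈ Set.Icc (0:ℝ) T, ∀ y1 y2 : ℝ,
        phi t1 + ε < y1 → y1 < psi t1 - ε → phi t2 + ε < y2 → y2 < psi t2 - ε →
        |b t1 y1 - b t2 y2| ≤ c1 / ε ^ p * (|y1 - y2| + |t1 - t2| ^ lam))
    (hB3low : ∀ t ∈ Set.Icc (0:ℝ) T, ∀ y : ℝ, phi t < y → y ≤ phi t + ystar → y < psi t →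
      c2 / (y - phi t) ^ gam ≤ b t y)
    (hB3up : ∀ t ∈ Set.Icc (0:ℝ) T, ∀ y : ℝ, psi t - ystar ≤ y → y < psi t → phi t < y →
      b t y ≤ -(c2 / (psi t - y) ^ gam))
    (Y0 : ℝ) (hB1 : phi 0 < Y0 ∧ Y0 < psi 0)
    :
    ∃ C : ℝ, 0 < C ∧
      ∀ (Z : ℝ → ℝ) (Lam : ℝ), 0 < Lam → Z 0 = 0 →
        (∀ s ∈ Set.Icc (0:ℝ) T, ∀ t ∈ Set.Icc (0:ℝ) T, |Z t - Z s| ≤ Lam * |t - s| ^ lam) →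
        ∀ Y : ℝ → ℝ, ContinuousOn Y (Set.Icc (0:ℝ) T) →
          (∀ t ∈ Set.Icc (0:ℝ) T, phi t < Y t ∧ Y t < psi t) →
          (∀ t ∈ Set.Icc (0:ℝ) T, Y t = Y0 + (∫ s in (0:ℝ)..t, b s (Y s)) + Z t) →
          ∀ s ∈ Set.Icc (0:ℝ) T, ∀ t ∈ Set.Icc (0:ℝ) T,
            |Y t - Y s| ≤
              C * (1 + Lam ^ (max p (gam * lam + lam - 1) / (gam * lam + lam - 1)))
                * |t - s| ^ lam :=
  stmt_7_general T lam hT hlam phi psi K hK hphiH hpsiH b c1 p c2 ystar gam hc1 hc2 hystar hgam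
    hB2cont hB2lip hB3low hB3up Y0 hB1
end
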